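/- arXiv:math/0503372 — 4 statements merged into one kernel-verified Lean document; each statement's English description precedes it below -/
import Mathlib

section
/- Let s > 0 be real, l ≥ 2 an integer, (s)_j = s(s+1)⋯(s+j−1) the Pochhammer symbol, and Φ(u) = (1+u)^{−s} − 1 + s·u. Then for all u ≥ 0, |Φ(u) − Σ_{j=2}^{l−1} (−1)^j ((s)_j / j!) u^j| ≤ ((s)_l / l!) u^l. -/
open Real Finset

/-- The Pochhammer symbol `(s)_j = s (s+1) ⋯ (s+j-1)`. -/
noncomputable def poch (s : ℝ) (j : ℕ) : ℝ := ∏ i ∈ Finset.range j, (s + i)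

noncomputable def Tay (s : ℝ) (l : ℕ) (u : ℝ) : ℝ :=
  ∑ j ∈ Finset.range l, (-1 : ℝ) ^ j * (poch s j / (Nat.factorial j)) * u ^ j

noncomputable def Rem (s : ℝ) (l : ℕ) (u : ℝ) : ℝ :=
  (-1 : ℝ) ^ l * ((1 + u) ^ (-s) - Tay s l u)

lemma poch_succ' (s : ℝ) (l : ℕ) : poch s (l + 1) = s * poch (s + 1) l := by
  rw [poch, Finset.prod_range_succ', poch]
  simp only [Nat.cast_zero, add_zero, Nat.cast_add, Nat.cast_one]
  rw [mul_comm]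
  congr 1
  apply Finset.prod_congr rfl
  intro i _
  ring

lemma hasDerivAt_Tay (s : ℝ) (l : ℕ) (x : ℝ) :
    HasDerivAt (fun u => Tay s (l + 1) u) (-s * Tay (s + 1) l x) x := by
  have h : HasDerivAt (fun u => Tay s (l + 1) u)
      (∑ j ∈ Finset.range (l + 1),
        (-1 : ℝ) ^ j * (poch s j / (Nat.factorial j)) * (j * x ^ (j - 1))) x := by
    apply HasDerivAt.fun_sum
    intro j _
    exact (hasDerivAt_pow j x).const_mul _
  convert h using 1
  rw [Finset.sum_range_succ']
  simp only [Nat.cast_zero, pow_zero, zero_mul, mul_zero, add_zero]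
  rw [Tay, Finset.mul_sum]
  apply Finset.sum_congr rfl
  intro j _
  have hfac : ((j + 1).factorial : ℝ) = (j + 1) * (j.factorial : ℝ) := by
    rw [Nat.factorial_succ]; push_cast; ring
  have hfp : (0 : ℝ) < (j.factorial : ℝ) := by positivity
  rw [poch_succ' s j]
  simp only [Nat.add_sub_cancel, pow_succ, hfac]
  push_cast
  field_simp

lemma hasDerivAt_Rem (s : ℝ) (l : ℕ) (x : ℝ) (hx : -1 < x) :
    HasDerivAt (fun u => Rem s (l + 1) u) (s * Rem (s + 1) l x) x := by
  have h1x : (0:ℝ) < 1 + x := by linarith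
  have hid : HasDerivAt (fun u : ℝ => 1 + u) 1 x := by
    simpa using (hasDerivAt_id x).const_add (1 : ℝ)
  have hf : HasDerivAt (fun u : ℝ => (1 + u) ^ (-s)) (-s * (1 + x) ^ (-s - 1) * 1) x :=
    (Real.hasDerivAt_rpow_const (p := -s) (Or.inl (ne_of_gt h1x))).comp x hid
  have hT := hasDerivAt_Tay s l x
  have h := ((hf.sub hT).const_mul ((-1 : ℝ) ^ (l + 1)))
  refine h.congr_deriv ?_
  rw [Rem, show (-s - 1 : ℝ) = -(s + 1) from by ring, pow_succ]
  ring

lemma Tay_zero (s : ℝ) (l : ℕ) : Tay s (l + 1) 0 = 1 := by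
  rw [Tay, Finset.sum_range_succ']
  simp [poch]

lemma Rem_zero (s : ℝ) (l : ℕ) : Rem s (l + 1) 0 = 0 := by
  rw [Rem, Tay_zero]
  simp

lemma key (l : ℕ) : ∀ (s : ℝ), 0 < s → ∀ u : ℝ, 0 ≤ u →
    0 ≤ Rem s l u ∧ Rem s l u ≤ poch s l / (Nat.factorial l) * u ^ l := by
  induction l with
  | zero =>
    intro s hs u hu
    have h1u : (1:ℝ) ≤ 1 + u := by linarith
    constructor
    · simp only [Rem, Tay, pow_zero, Finset.range_zero, Finset.sum_empty, sub_zero, one_mul]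
      positivity
    · simp only [Rem, Tay, pow_zero, Finset.range_zero, Finset.sum_empty, sub_zero, one_mul,
        poch, Finset.prod_range_zero, Nat.factorial_zero, Nat.cast_one, div_one, mul_one]
      exact Real.rpow_le_one_of_one_le_of_nonpos h1u (by linarith)
  | succ l ih =>
    intro s hs u hu
    have hmem : ∀ x ∈ Set.Ici (0:ℝ), -1 < x := fun x hx => by
      simp only [Set.mem_Ici] at hx; linarith
    -- lower bound: Rem s (l+1) is monotone on Ici 0
    have monoF : MonotoneOn (fun u => Rem s (l + 1) u) (Set.Ici 0) := by
      apply monotoneOn_of_deriv_nonneg (convex_Ici 0)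
      · intro x hx
        exact (hasDerivAt_Rem s l x (hmem x hx)).continuousAt.continuousWithinAt
      · intro x hx
        rw [interior_Ici] at hx
        exact (hasDerivAt_Rem s l x (by simp at hx; linarith)).differentiableAt.differentiableWithinAt
      · intro x hx
        rw [interior_Ici] at hx
        simp only [Set.mem_Ioi] at hx
        rw [(hasDerivAt_Rem s l x (by linarith)).deriv]
        have := (ih (s + 1) (by linarith) x (le_of_lt hx)).1
        positivity
    have hF0 : Rem s (l + 1) 0 = 0 := Rem_zero s l
    have hlow : 0 ≤ Rem s (l + 1) u := by
      have h := monoF (Set.self_mem_Ici) (Set.mem_Ici.mpr hu) hu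
      simpa [hF0] using h
    refine ⟨hlow, ?_⟩
    -- upper bound: H = bound - Rem is monotone
    set c : ℝ := poch s (l + 1) / (Nat.factorial (l + 1)) with hc
    have hGderiv : ∀ x : ℝ, HasDerivAt (fun u => c * u ^ (l + 1))
        (s * (poch (s + 1) l / (Nat.factorial l) * x ^ l)) x := by
      intro x
      have h := (hasDerivAt_pow (l + 1) x).const_mul c
      refine h.congr_deriv ?_
      have hfac : ((l + 1).factorial : ℝ) = (l + 1) * (l.factorial : ℝ) := by
        rw [Nat.factorial_succ]; push_cast; ring
      have hfp : (0 : ℝ) < (l.factorial : ℝ) := by positivity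
      rw [hc, poch_succ', hfac]
      simp only [Nat.add_sub_cancel]
      push_cast
      field_simp
    have monoH : MonotoneOn (fun u => c * u ^ (l + 1) - Rem s (l + 1) u) (Set.Ici 0) := by
      apply monotoneOn_of_deriv_nonneg (convex_Ici 0)
      · intro x hx
        exact ((hGderiv x).sub (hasDerivAt_Rem s l x (hmem x hx))).continuousAt.continuousWithinAt
      · intro x hx
        rw [interior_Ici] at hx
        simp only [Set.mem_Ioi] at hx
        exact ((hGderiv x).sub (hasDerivAt_Rem s l x (by linarith))).differentiableAt.differentiableWithinAt
      · intro x hx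
        rw [interior_Ici] at hx
        simp only [Set.mem_Ioi] at hx
        rw [show (fun u => c * u ^ (l + 1) - Rem s (l + 1) u) = ((fun u => c * u ^ (l + 1)) - fun u => Rem s (l + 1) u) from rfl, ((hGderiv x).sub (hasDerivAt_Rem s l x (by linarith))).deriv]
        have h2 := (ih (s + 1) (by linarith) x (le_of_lt hx)).2
        have : Rem (s + 1) l x ≤ poch (s + 1) l / (Nat.factorial l) * x ^ l := h2
        nlinarith
    have hH0 : c * (0:ℝ) ^ (l + 1) - Rem s (l + 1) 0 = 0 := by
      rw [hF0]; simp
    have h := monoH (Set.self_mem_Ici) (Set.mem_Ici.mpr hu) hu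
    simp only [hF0, zero_pow (Nat.succ_ne_zero l), mul_zero, sub_zero] at h
    linarith

/-- Alternating remainder bound for the binomial series: for `s > 0`, `l ≥ 2` and
`Φ(u) = (1+u)^{-s} - 1 + s u`,
`|Φ(u) - Σ_{j=2}^{l-1} (-1)^j ((s)_j/j!) u^j| ≤ ((s)_l/l!) u^l` for all `u ≥ 0`. -/
theorem stmt_5 (s : ℝ) (hs : 0 < s) (l : ℕ) (hl : 2 ≤ l) (u : ℝ) (hu : 0 ≤ u) :
    |((1 + u) ^ (-s) - 1 + s * u)
        - ∑ j ∈ Finset.Icc 2 (l - 1), (-1 : ℝ) ^ j * (poch s j / (Nat.factorial j)) * u ^ j|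
      ≤ (poch s l / (Nat.factorial l)) * u ^ l := by
  have hIcc : Finset.Icc 2 (l - 1) = Finset.Ico 2 l := by
    rw [← Finset.Ico_add_one_right_eq_Icc]
    congr 1
    omega
  have hsplit : Tay s l u = 1 - s * u +
      ∑ j ∈ Finset.Icc 2 (l - 1), (-1 : ℝ) ^ j * (poch s j / (Nat.factorial j)) * u ^ j := by
    rw [hIcc, Tay, Finset.range_eq_Ico,
      ← Finset.sum_Ico_consecutive _ (by omega : 0 ≤ 2) (by omega : 2 ≤ l)]
    have h01 : ∑ j ∈ Finset.Ico 0 2, (-1 : ℝ) ^ j * (poch s j / (Nat.factorial j)) * u ^ j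
        = 1 - s * u := by
      rw [← Finset.range_eq_Ico]
      simp [Finset.sum_range_succ, poch, Finset.prod_range_succ]
      ring
    rw [h01]
  have hΦ : ((1 + u) ^ (-s) - 1 + s * u)
      - ∑ j ∈ Finset.Icc 2 (l - 1), (-1 : ℝ) ^ j * (poch s j / (Nat.factorial j)) * u ^ j
      = (-1 : ℝ) ^ l * Rem s l u := by
    rw [Rem, ← mul_assoc, ← pow_add, ← two_mul, pow_mul]
    simp only [neg_one_sq, one_pow, one_mul]
    rw [hsplit]
    ring
  obtain ⟨h0, h1⟩ := key l s hs u hu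
  rw [hΦ, abs_mul, abs_pow, abs_neg, abs_one, one_pow, one_mul, abs_of_nonneg h0]
  exact h1
end

section
/- Let a > 0, x > a, and for r > 0 let R(r) = e^{r(x−a)} K_ν(rx)/K_ν(ra) with ν = (n−1)/2, n ≥ 2. Then (a/x)^ν ≤ R(r) ≤ (a/x)^{1/2} for all r > 0. -/
open Real MeasureTheory Set

/-- The modified Bessel function of the third kind (Macdonald function), via the
integral representation `K_ν(z) = ∫₀^∞ e^{-z cosh t} cosh(ν t) dt` (for `z > 0`). -/
noncomputable def besselK (ν z : ℝ) : ℝ :=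
  ∫ t in Ioi (0:ℝ), Real.exp (-z * Real.cosh t) * Real.cosh (ν * t)

/-- The modified Bessel function of the first kind, via the integral representation
`I_ν(z) = (1/π) ∫₀^π e^{z cos θ} cos(ν θ) dθ - (sin(νπ)/π) ∫₀^∞ e^{-z cosh t - ν t} dt`. -/
noncomputable def besselI (ν z : ℝ) : ℝ :=
  (1 / π) * ∫ θ in Ioo (0:ℝ) π, Real.exp (z * Real.cos θ) * Real.cos (ν * θ)
    - (Real.sin (ν * π) / π) * ∫ t in Ioi (0:ℝ), Real.exp (-z * Real.cosh t - ν * t)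

/-- The Bessel function of the first kind, via the integral representation
`J_μ(z) = (1/π) ∫₀^π cos(μθ - z sin θ) dθ - (sin(μπ)/π) ∫₀^∞ e^{-z sinh t - μ t} dt`. -/
noncomputable def besselJ (μ z : ℝ) : ℝ :=
  (1 / π) * ∫ θ in Ioo (0:ℝ) π, Real.cos (μ * θ - z * Real.sin θ)
    - (Real.sin (μ * π) / π) * ∫ t in Ioi (0:ℝ), Real.exp (-z * Real.sinh t - μ * t)


open ENNReal

lemma cosh_eq_one_add (t : ℝ) : Real.cosh t = 1 + 2 * Real.sinh (t/2) ^ 2 := by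
  have h := Real.cosh_two_mul (t/2)
  have h2 : 2 * (t/2) = t := by ring
  rw [h2] at h
  rw [h, Real.cosh_sq]; ring

lemma cosh_quad {t : ℝ} (ht : 0 ≤ t) : 1 + t^2/2 ≤ Real.cosh t := by
  rw [cosh_eq_one_add t]
  have h := Real.self_le_sinh_iff.mpr (by linarith : (0:ℝ) ≤ t/2)
  nlinarith [h]

lemma cosh_le_exp' {y : ℝ} (hy : 0 ≤ y) : Real.cosh y ≤ Real.exp y := by
  have h := Real.sinh_nonneg_iff.mpr hy
  have h2 := Real.cosh_add_sinh y
  linarith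

lemma integrableBK {ν z : ℝ} (hν : 0 ≤ ν) (hz : 0 < z) :
    IntegrableOn (fun t => Real.exp (-z * Real.cosh t) * Real.cosh (ν * t)) (Ioi (0:ℝ)) := by
  have hcont : Continuous fun t => Real.exp (-z * Real.cosh t) * Real.cosh (ν * t) := by
    fun_prop
  set B := (ν + 1)^2 / (2*z) with hB
  have hBz : B * (2*z) = (ν+1)^2 := by rw [hB]; exact div_mul_cancel₀ _ (by positivity)
  have hg : IntegrableOn (fun t => Real.exp B * Real.exp (-t)) (Ioi (0:ℝ)) := by
    have h1 := (exp_neg_integrableOn_Ioi 0 (one_pos)).const_mul (Real.exp B)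
    simpa [IntegrableOn] using h1
  apply Integrable.mono' hg hcont.aestronglyMeasurable.restrict
  filter_upwards [ae_restrict_mem measurableSet_Ioi] with t ht
  have ht0 : (0:ℝ) < t := ht
  have h1 : Real.cosh (ν*t) ≤ Real.exp (ν*t) := cosh_le_exp' (by positivity)
  have h2 : 1 + t^2/2 ≤ Real.cosh t := cosh_quad ht0.le
  rw [Real.norm_eq_abs, abs_of_nonneg (by positivity)]
  calc Real.exp (-z * Real.cosh t) * Real.cosh (ν * t)
      ≤ Real.exp (-z * Real.cosh t) * Real.exp (ν * t) :=
        mul_le_mul_of_nonneg_left h1 (Real.exp_pos _).le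
    _ = Real.exp (-z * Real.cosh t + ν * t) := (Real.exp_add _ _).symm
    _ ≤ Real.exp (B + -t) := by
        apply Real.exp_le_exp.mpr
        have h3 : z * (1 + t^2/2) ≤ z * Real.cosh t := mul_le_mul_of_nonneg_left h2 hz.le
        nlinarith [sq_nonneg (z*t - (ν+1)), hz]
    _ = Real.exp B * Real.exp (-t) := Real.exp_add _ _

lemma besselK_pos' {ν z : ℝ} (hν : 0 ≤ ν) (hz : 0 < z) :
    0 < ∫ t in Ioi (0:ℝ), Real.exp (-z * Real.cosh t) * Real.cosh (ν * t) := by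
  rw [setIntegral_pos_iff_support_of_nonneg_ae
    (ae_of_all _ fun t => by positivity) (integrableBK hν hz)]
  have hsub : Ioi (0:ℝ) ⊆ Function.support (fun t => Real.exp (-z * Real.cosh t) * Real.cosh (ν * t)) ∩ Ioi 0 := by
    intro t ht
    exact ⟨(mul_pos (Real.exp_pos _) (Real.cosh_pos _)).ne', ht⟩
  calc (0:ℝ≥0∞) < volume (Ioi (0:ℝ)) := by simp [Real.volume_Ioi]
    _ ≤ _ := measure_mono hsub


lemma L1 {M g σ : ℝ} (hM : 1 ≤ M) (hg : 0 ≤ g) (hgσ : g ≤ σ) :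
    Real.cosh (M*g) * Real.cosh σ ≤ Real.cosh (M*σ) * Real.cosh g := by
  have hσ : 0 ≤ σ := hg.trans hgσ
  have key : ∀ A B : ℝ, 2 * (Real.cosh A * Real.cosh B) = Real.cosh (A+B) + Real.cosh (A-B) := by
    intro A B; rw [Real.cosh_add, Real.cosh_sub]; ring
  have e1 : Real.cosh (M*g + σ) ≤ Real.cosh (M*σ + g) := by
    rw [Real.cosh_le_cosh, abs_of_nonneg (by nlinarith), abs_of_nonneg (by nlinarith)]
    nlinarith
  have e2 : Real.cosh (M*g - σ) ≤ Real.cosh (M*σ - g) := by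
    rw [Real.cosh_le_cosh, abs_of_nonneg (by nlinarith : (0:ℝ) ≤ M*σ - g)]
    apply abs_le.mpr
    constructor <;> nlinarith
  nlinarith [key (M*g) σ, key (M*σ) g]

lemma L2 {m : ℕ} {g σ : ℝ} (hg : 0 < g) (hgσ : g ≤ σ) :
    Real.sinh g ^ m * Real.cosh g * Real.cosh (((m:ℝ)+1)*σ)
      ≤ Real.sinh σ ^ m * Real.cosh σ * Real.cosh (((m:ℝ)+1)*g) := by
  rcases Nat.eq_zero_or_pos m with hm | hm
  · subst hm
    norm_num
    rw [mul_comm]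
  · set M := (m:ℝ)+1 with hM
    have hm1 : (1:ℝ) ≤ (m:ℝ) := by exact_mod_cast hm
    set u : ℝ → ℝ := fun τ => Real.sinh τ ^ m * Real.cosh τ / Real.cosh (M*τ) with hu
    have hd : ∀ τ : ℝ, HasDerivAt u
        (((((m:ℝ) * Real.sinh τ ^ (m-1) * Real.cosh τ) * Real.cosh τ
            + Real.sinh τ ^ m * Real.sinh τ) * Real.cosh (M*τ)
          - Real.sinh τ ^ m * Real.cosh τ * (Real.sinh (M*τ) * M)) / Real.cosh (M*τ)^2) τ := by
      intro τ
      have h1 : HasDerivAt (fun τ : ℝ => Real.sinh τ ^ m)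
          ((m:ℝ) * Real.sinh τ ^ (m-1) * Real.cosh τ) τ := (Real.hasDerivAt_sinh τ).pow m
      have h2 := h1.mul (Real.hasDerivAt_cosh τ)
      have h3 : HasDerivAt (fun τ : ℝ => Real.cosh (M*τ)) (Real.sinh (M*τ) * M) τ := by
        have h := (Real.hasDerivAt_cosh (M*τ)).comp τ ((hasDerivAt_id τ).const_mul M)
        simp only [mul_one] at h
        exact h
      exact h2.div h3 (by positivity)
    have hmono : MonotoneOn u (Ici (0:ℝ)) := by
      apply monotoneOn_of_deriv_nonneg (convex_Ici 0)
      · exact fun τ _ => ((hd τ).differentiableAt.continuousAt).continuousWithinAt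
      · intro τ _; exact (hd τ).differentiableAt.differentiableWithinAt
      · intro τ hτ
        rw [interior_Ici, mem_Ioi] at hτ
        rw [(hd τ).deriv]
        apply div_nonneg _ (sq_nonneg _)
        have ha : 0 < Real.sinh τ := Real.sinh_pos_iff.mpr hτ
        have hb : 0 < Real.cosh τ := Real.cosh_pos τ
        have hab : Real.sinh τ ≤ Real.cosh τ := (Real.sinh_lt_cosh _).le
        have hsW : 0 ≤ Real.sinh (M*τ) := Real.sinh_nonneg_iff.mpr (by positivity)
        have hW : Real.sinh (M*τ) ≤ Real.cosh (M*τ) := (Real.sinh_lt_cosh _).le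
        have hcW : 0 < Real.cosh (M*τ) := Real.cosh_pos _
        have key1 : ((m:ℝ)+1)*(Real.sinh τ * Real.cosh τ)
            ≤ (m:ℝ)*Real.cosh τ^2 + Real.sinh τ^2 := by
          nlinarith [mul_nonneg (sub_nonneg.2 hab)
            (by nlinarith : (0:ℝ) ≤ (m:ℝ)*Real.cosh τ - Real.sinh τ)]
        have key2 : ((m:ℝ)+1)*(Real.sinh τ * Real.cosh τ)*Real.sinh (M*τ)
            ≤ ((m:ℝ)*Real.cosh τ^2 + Real.sinh τ^2)*Real.cosh (M*τ) :=
          mul_le_mul key1 hW hsW (by positivity)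
        have hpow : Real.sinh τ ^ m = Real.sinh τ ^ (m-1) * Real.sinh τ := by
          conv_lhs => rw [← Nat.succ_pred_eq_of_pos hm]
          rw [pow_succ, Nat.pred_eq_sub_one]
        rw [hpow, hM]
        nlinarith [mul_nonneg (pow_nonneg ha.le (m-1)) (sub_nonneg.mpr key2)]
    have happ := hmono (mem_Ici.mpr hg.le) (mem_Ici.mpr (hg.le.trans hgσ)) hgσ
    rw [hu] at happ
    simp only at happ
    rw [div_le_div_iff₀ (Real.cosh_pos _) (Real.cosh_pos _)] at happ
    rw [hM] at happ
    linarith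


lemma keyIneq (m : ℕ) {p q : ℝ} (hp : 0 < p) (hpq : p < q) :
    Real.sqrt (p/q) ^ (m+1) * (∫ t in Ioi (0:ℝ), Real.exp (-p * Real.cosh t) * Real.cosh ((((m:ℝ)+1)/2) * t))
        ≤ Real.exp (q - p) * (∫ t in Ioi (0:ℝ), Real.exp (-q * Real.cosh t) * Real.cosh ((((m:ℝ)+1)/2) * t))
    ∧ Real.exp (q - p) * (∫ t in Ioi (0:ℝ), Real.exp (-q * Real.cosh t) * Real.cosh ((((m:ℝ)+1)/2) * t))
        ≤ Real.sqrt (p/q) * (∫ t in Ioi (0:ℝ), Real.exp (-p * Real.cosh t) * Real.cosh ((((m:ℝ)+1)/2) * t)) := by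
  have hq : 0 < q := hp.trans hpq
  set ν : ℝ := ((m:ℝ)+1)/2 with hν
  have hν0 : 0 < ν := by positivity
  set c := Real.sqrt (p/q) with hc
  have hc0 : 0 < c := Real.sqrt_pos.mpr (by positivity)
  have hc2 : c^2 = p/q := Real.sq_sqrt (by positivity)
  have hc1 : c ≤ 1 := by
    rw [hc, show (1:ℝ) = Real.sqrt 1 by simp]
    exact Real.sqrt_le_sqrt (by rw [div_le_one hq]; exact hpq.le)
  have hqc2 : q * c^2 = p := by rw [hc2]; field_simp
  set f : ℝ → ℝ := fun s => 2 * Real.arsinh (c * Real.sinh (s/2)) with hf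
  -- basic facts about f
  have hsinh_half : ∀ s : ℝ, Real.sinh (f s / 2) = c * Real.sinh (s/2) := by
    intro s
    rw [hf]
    simp only
    rw [show 2 * Real.arsinh (c * Real.sinh (s/2)) / 2 = Real.arsinh (c * Real.sinh (s/2)) by ring,
      Real.sinh_arsinh]
  have hcosh_half : ∀ s : ℝ, Real.cosh (f s / 2) = Real.sqrt (1 + (c * Real.sinh (s/2))^2) := by
    intro s
    rw [hf]
    simp only
    rw [show 2 * Real.arsinh (c * Real.sinh (s/2)) / 2 = Real.arsinh (c * Real.sinh (s/2)) by ring,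
      Real.cosh_arsinh]
  have hfpos : ∀ s : ℝ, 0 < s → 0 < f s := by
    intro s hs
    rw [hf]
    have : 0 < Real.sinh (s/2) := Real.sinh_pos_iff.mpr (by linarith)
    have := Real.arsinh_pos_iff.mpr (by positivity : 0 < c * Real.sinh (s/2))
    positivity
  have hfle : ∀ s : ℝ, 0 < s → f s ≤ s := by
    intro s hs
    have h1 : Real.sinh (f s / 2) ≤ Real.sinh (s / 2) := by
      rw [hsinh_half s]
      have : 0 < Real.sinh (s/2) := Real.sinh_pos_iff.mpr (by linarith)
      nlinarith
    have := Real.sinh_le_sinh.mp h1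
    linarith
  -- derivative
  have hD : ∀ s : ℝ, HasDerivAt f (c * Real.cosh (s/2) / Real.cosh (f s / 2)) s := by
    intro s
    have hhalf : HasDerivAt (fun s : ℝ => s/2) (1/2) s := by
      simpa using (hasDerivAt_id s).div_const 2
    have hsinh : HasDerivAt (fun s : ℝ => Real.sinh (s/2)) (Real.cosh (s/2) * (1/2)) s :=
      by have h := (Real.hasDerivAt_sinh (s/2)).comp s hhalf; exact h
    have h1 : HasDerivAt (fun s : ℝ => c * Real.sinh (s/2)) (c * (Real.cosh (s/2) * (1/2))) s :=
      hsinh.const_mul c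
    have h2 := (Real.hasDerivAt_arsinh (c * Real.sinh (s/2))).comp s h1
    have h3 := h2.const_mul 2
    have heq : 2 * ((Real.sqrt (1 + (c * Real.sinh (s/2)) ^ 2))⁻¹ * (c * (Real.cosh (s/2) * (1/2))))
        = c * Real.cosh (s/2) / Real.cosh (f s / 2) := by
      rw [hcosh_half s]
      have hpos : 0 < Real.sqrt (1 + (c * Real.sinh (s/2))^2) := Real.sqrt_pos.mpr (by positivity)
      field_simp
    rw [← heq]
    exact h3
  -- image
  have himg : f '' (Ioi 0) = Ioi 0 := by
    apply Subset.antisymm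
    · rintro t ⟨s, hs, rfl⟩
      exact hfpos s hs
    · intro t ht
      refine ⟨2 * Real.arsinh (Real.sinh (t/2) / c), ?_, ?_⟩
      · have h1 : 0 < Real.sinh (t/2) := Real.sinh_pos_iff.mpr (by simpa using (half_pos (mem_Ioi.mp ht)))
        have := Real.arsinh_pos_iff.mpr (by positivity : 0 < Real.sinh (t/2) / c)
        exact mem_Ioi.mpr (by positivity)
      · rw [hf]
        simp only
        rw [show 2 * Real.arsinh (Real.sinh (t/2) / c) / 2 = Real.arsinh (Real.sinh (t/2) / c) by ring,
          Real.sinh_arsinh, mul_div_cancel₀ _ hc0.ne', Real.arsinh_sinh]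
        ring
  -- injectivity
  have hinj : InjOn f (Ioi 0) := by
    intro s1 _ s2 _ h
    rw [hf] at h
    simp only at h
    have h1 := mul_left_cancel₀ (two_ne_zero) h
    have h2 := Real.arsinh_injective h1
    have h3 := mul_left_cancel₀ hc0.ne' h2
    have h4 := Real.sinh_injective h3
    linarith
  -- change of variables
  have cov : (∫ t in Ioi (0:ℝ), Real.exp (-q * Real.cosh t) * Real.cosh (ν * t))
      = ∫ s in Ioi (0:ℝ), |c * Real.cosh (s/2) / Real.cosh (f s / 2)|
          • (Real.exp (-q * Real.cosh (f s)) * Real.cosh (ν * f s)) := by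
    conv_lhs => rw [← himg]
    exact integral_image_eq_integral_abs_deriv_smul measurableSet_Ioi
      (fun s _ => (hD s).hasDerivWithinAt) hinj
      (fun t => Real.exp (-q * Real.cosh t) * Real.cosh (ν * t))
  -- the q-cosh identity
  have hcoshq : ∀ s : ℝ, q * Real.cosh (f s) = q + p * (Real.cosh s - 1) := by
    intro s
    rw [cosh_eq_one_add (f s), hsinh_half s, cosh_eq_one_add s]
    nlinarith [hqc2]
  set F : ℝ → ℝ := fun s => (c * Real.cosh (s/2) / Real.cosh (f s / 2))
      * (Real.exp (-p * Real.cosh s) * Real.cosh (ν * f s)) with hF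
  set base : ℝ → ℝ := fun s => Real.exp (-p * Real.cosh s) * Real.cosh (ν * s) with hbase
  have main_eq : Real.exp (q - p) * (∫ t in Ioi (0:ℝ), Real.exp (-q * Real.cosh t) * Real.cosh (ν * t))
      = ∫ s in Ioi (0:ℝ), F s := by
    rw [cov, ← integral_const_mul]
    apply setIntegral_congr_fun measurableSet_Ioi
    intro s _
    have hpos' : 0 < c * Real.cosh (s/2) / Real.cosh (f s/2) := by positivity
    simp only [smul_eq_mul, hF]
    rw [abs_of_pos hpos']
    rw [show Real.exp (q-p) * (c * Real.cosh (s/2) / Real.cosh (f s/2)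
        * (Real.exp (-q * Real.cosh (f s)) * Real.cosh (ν * f s)))
      = (c * Real.cosh (s/2) / Real.cosh (f s/2))
        * ((Real.exp (q-p) * Real.exp (-q * Real.cosh (f s))) * Real.cosh (ν * f s)) by ring,
      ← Real.exp_add]
    congr 3
    have := hcoshq s
    linarith
  -- pointwise bounds
  have hb_upper : ∀ s ∈ Ioi (0:ℝ), F s ≤ c * base s := by
    intro s hs
    have hs0 : (0:ℝ) < s := hs
    have hg0 : 0 < f s / 2 := by have := hfpos s hs0; linarith
    have hgσ : f s / 2 ≤ s / 2 := by have := hfle s hs0; linarith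
    have hl1 := L1 (M := (m:ℝ)+1) (by linarith [Nat.cast_nonneg (α := ℝ) m]) hg0.le hgσ
    have hνf : ν * f s = ((m:ℝ)+1) * (f s / 2) := by rw [hν]; ring
    have hνs : ν * s = ((m:ℝ)+1) * (s / 2) := by rw [hν]; ring
    rw [hF, hbase]
    simp only
    rw [hνf, hνs]
    have hcg : 0 < Real.cosh (f s / 2) := Real.cosh_pos _
    have hexp : 0 < Real.exp (-p * Real.cosh s) := Real.exp_pos _
    rw [div_mul_eq_mul_div, div_le_iff₀ hcg]
    have h2 : c * Real.cosh (s/2) * Real.cosh (((m:ℝ)+1) * (f s / 2))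
        ≤ c * Real.cosh (((m:ℝ)+1) * (s/2)) * Real.cosh (f s / 2) := by
      nlinarith [hl1, hc0]
    calc c * Real.cosh (s/2) * (Real.exp (-p * Real.cosh s) * Real.cosh (((m:ℝ)+1) * (f s/2)))
        = (c * Real.cosh (s/2) * Real.cosh (((m:ℝ)+1) * (f s / 2))) * Real.exp (-p * Real.cosh s) := by ring
      _ ≤ (c * Real.cosh (((m:ℝ)+1) * (s/2)) * Real.cosh (f s / 2)) * Real.exp (-p * Real.cosh s) :=
          mul_le_mul_of_nonneg_right h2 hexp.le
      _ = c * (Real.exp (-p * Real.cosh s) * Real.cosh (((m:ℝ)+1) * (s/2))) * Real.cosh (f s / 2) := by ring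
  have hb_lower : ∀ s ∈ Ioi (0:ℝ), c^(m+1) * base s ≤ F s := by
    intro s hs
    have hs0 : (0:ℝ) < s := hs
    have hg0 : 0 < f s / 2 := by have := hfpos s hs0; linarith
    have hσ0 : 0 < s / 2 := by linarith
    have hgσ : f s / 2 ≤ s / 2 := by have := hfle s hs0; linarith
    have hl2 := L2 (m := m) hg0 hgσ
    have hνf : ν * f s = ((m:ℝ)+1) * (f s / 2) := by rw [hν]; ring
    have hνs : ν * s = ((m:ℝ)+1) * (s / 2) := by rw [hν]; ring
    rw [hF, hbase]
    simp only
    rw [hνf, hνs]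
    have hcg : 0 < Real.cosh (f s / 2) := Real.cosh_pos _
    have hexp : 0 < Real.exp (-p * Real.cosh s) := Real.exp_pos _
    have hsσ : 0 < Real.sinh (s/2) := Real.sinh_pos_iff.mpr hσ0
    have hsg : Real.sinh (f s / 2) = c * Real.sinh (s/2) := hsinh_half s
    -- c^m * sinh(s/2)^m = sinh(f s/2)^m
    have hcm : c^m * Real.sinh (s/2)^m = Real.sinh (f s / 2)^m := by
      rw [hsg, mul_pow]
    -- key : c^(m+1) * cosh((m+1)(s/2)) * cosh(f s/2) ≤ c * cosh(s/2) * cosh((m+1)(f s/2))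
    have key : c^(m+1) * Real.cosh (((m:ℝ)+1) * (s/2)) * Real.cosh (f s / 2)
        ≤ c * Real.cosh (s/2) * Real.cosh (((m:ℝ)+1) * (f s / 2)) := by
      have h1 : Real.sinh (s/2)^m * (c^(m+1) * Real.cosh (((m:ℝ)+1) * (s/2)) * Real.cosh (f s / 2))
          ≤ Real.sinh (s/2)^m * (c * Real.cosh (s/2) * Real.cosh (((m:ℝ)+1) * (f s / 2))) := by
        have expand : Real.sinh (s/2)^m * (c^(m+1) * Real.cosh (((m:ℝ)+1) * (s/2)) * Real.cosh (f s / 2))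
            = c * ((c^m * Real.sinh (s/2)^m) * Real.cosh (f s / 2) * Real.cosh (((m:ℝ)+1) * (s/2))) := by
          ring
        rw [expand, hcm]
        have expand2 : Real.sinh (s/2)^m * (c * Real.cosh (s/2) * Real.cosh (((m:ℝ)+1) * (f s / 2)))
            = c * (Real.sinh (s/2)^m * Real.cosh (s/2) * Real.cosh (((m:ℝ)+1) * (f s / 2))) := by ring
        rw [expand2]
        exact mul_le_mul_of_nonneg_left hl2 hc0.le
      exact le_of_mul_le_mul_left h1 (by positivity)
    rw [div_mul_eq_mul_div, le_div_iff₀ hcg]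
    calc c^(m+1) * (Real.exp (-p * Real.cosh s) * Real.cosh (((m:ℝ)+1) * (s/2))) * Real.cosh (f s / 2)
        = (c^(m+1) * Real.cosh (((m:ℝ)+1) * (s/2)) * Real.cosh (f s / 2)) * Real.exp (-p * Real.cosh s) := by ring
      _ ≤ (c * Real.cosh (s/2) * Real.cosh (((m:ℝ)+1) * (f s / 2))) * Real.exp (-p * Real.cosh s) :=
          mul_le_mul_of_nonneg_right key hexp.le
      _ = c * Real.cosh (s/2) * (Real.exp (-p * Real.cosh s) * Real.cosh (((m:ℝ)+1) * (f s/2))) := by ring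
  -- integrability
  have hIp : IntegrableOn base (Ioi 0) := integrableBK hν0.le hp
  have hf_cont : Continuous f := by
    rw [hf]
    exact continuous_const.mul (Real.continuous_arsinh.comp
      (continuous_const.mul (Real.continuous_sinh.comp (continuous_id.div_const 2))))
  have hF_cont : Continuous F := by
    rw [hF]
    apply Continuous.mul
    · apply Continuous.div
      · exact continuous_const.mul (Real.continuous_cosh.comp (continuous_id.div_const 2))
      · exact Real.continuous_cosh.comp (hf_cont.div_const 2)
      · intro s; exact (Real.cosh_pos _).ne'
    · apply Continuous.mul
      · exact Real.continuous_exp.comp (by fun_prop)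
      · exact Real.continuous_cosh.comp (continuous_const.mul hf_cont)
  have hF_int : IntegrableOn F (Ioi 0) := by
    apply Integrable.mono' (hIp.const_mul c) hF_cont.aestronglyMeasurable.restrict
    filter_upwards [ae_restrict_mem measurableSet_Ioi] with s hs
    have hFnn : 0 ≤ F s := by
      rw [hF]
      have := hfpos s hs
      positivity
    rw [Real.norm_eq_abs, abs_of_nonneg hFnn]
    exact hb_upper s hs
  constructor
  · rw [main_eq, show (Real.sqrt (p/q))^(m+1) * (∫ t in Ioi (0:ℝ), Real.exp (-p * Real.cosh t) * Real.cosh (ν * t))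
      = ∫ s in Ioi (0:ℝ), c^(m+1) * base s by rw [integral_const_mul]]
    exact setIntegral_mono_on (hIp.const_mul _) hF_int measurableSet_Ioi hb_lower
  · rw [main_eq, show (Real.sqrt (p/q)) * (∫ t in Ioi (0:ℝ), Real.exp (-p * Real.cosh t) * Real.cosh (ν * t))
      = ∫ s in Ioi (0:ℝ), c * base s by rw [integral_const_mul]]
    exact setIntegral_mono_on hF_int (hIp.const_mul _) measurableSet_Ioi hb_upper


/-- Two-sided bound for the ratio `R(r) = e^{r(x-a)} K_ν(rx)/K_ν(ra)` with
`ν = (n-1)/2`, `n ≥ 2`, `0 < a < x`: `(a/x)^ν ≤ R(r) ≤ (a/x)^{1/2}` for all `r > 0`. -/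
theorem stmt_9 (n : ℕ) (hn : 2 ≤ n) (a x : ℝ) (ha : 0 < a) (hx : a < x) (r : ℝ) (hr : 0 < r) :
    (a / x) ^ (((n : ℝ) - 1) / 2)
        ≤ Real.exp (r * (x - a)) * besselK (((n : ℝ) - 1) / 2) (r * x)
            / besselK (((n : ℝ) - 1) / 2) (r * a) ∧
    Real.exp (r * (x - a)) * besselK (((n : ℝ) - 1) / 2) (r * x)
        / besselK (((n : ℝ) - 1) / 2) (r * a) ≤ (a / x) ^ ((1 : ℝ) / 2) := by
  have hx0 : 0 < x := ha.trans hx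
  have h2n : (2:ℝ) ≤ (n:ℝ) := by exact_mod_cast hn
  set m := n - 2 with hm
  have hcast : ((m:ℝ)+1) = (n:ℝ)-1 := by
    have hm' : ((m:ℝ)) = (n:ℝ) - 2 := by
      rw [hm, Nat.cast_sub hn]; norm_num
    linarith
  set p := r * a with hp'
  set q := r * x with hq'
  have hp : 0 < p := by positivity
  have hpq : p < q := by exact mul_lt_mul_of_pos_left hx hr
  have hq : 0 < q := hp.trans hpq
  obtain ⟨hA, hB⟩ := keyIneq m hp hpq
  rw [hcast] at hA hB
  have hν0 : (0:ℝ) ≤ ((n:ℝ)-1)/2 := by linarith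
  have hKp : 0 < besselK (((n:ℝ)-1)/2) p := by
    unfold besselK
    exact besselK_pos' hν0 hp
  have hpq_div : p/q = a/x := by
    rw [hp', hq', mul_div_mul_left _ _ hr.ne']
  have hax0 : (0:ℝ) ≤ a/x := by positivity
  have hexp_eq : Real.exp (r*(x-a)) = Real.exp (q-p) := by
    rw [hp', hq']; ring_nf
  have hsqrt : Real.sqrt (p/q) = (a/x) ^ ((1:ℝ)/2) := by
    rw [hpq_div, Real.sqrt_eq_rpow]
  have hpow : Real.sqrt (p/q) ^ (m+1) = (a/x) ^ (((n:ℝ)-1)/2) := by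
    rw [hsqrt, ← Real.rpow_natCast ((a/x) ^ ((1:ℝ)/2)) (m+1), ← Real.rpow_mul hax0]
    congr 1
    push_cast
    linarith
  constructor
  · rw [le_div_iff₀ hKp, hexp_eq, ← hpow]
    exact hA
  · rw [div_le_iff₀ hKp, hexp_eq, ← hsqrt]
    exact hB
end

section
/- Let n ≥ 2, ν = (n−1)/2, a > 0. Then ∫₀^∞ (K_ν(rx)/K_ν(ra)) r^{n−2} dr, as a function of x > a, is asymptotic to Γ(n−1)·(x−a)^{−(n−1)} as x → a⁺; more precisely, Γ(n−1)(a/x)^ν (x−a)^{−n+1} ≤ ∫₀^∞ (K_ν(rx)/K_ν(ra)) r^{n−2} dr ≤ Γ(n−1)(a/x)^{1/2} (x−a)^{−n+1} for all x > a. -/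
open Real MeasureTheory Set

namespace StmtAux
open Filter Topology

variable {ν z : ℝ}

lemma cosh_le_exp_abs (x : ℝ) : Real.cosh x ≤ Real.exp |x| := by
  rw [Real.cosh_eq]
  have h1 : Real.exp x ≤ Real.exp |x| := Real.exp_le_exp.2 (le_abs_self x)
  have h2 : Real.exp (-x) ≤ Real.exp |x| := Real.exp_le_exp.2 (neg_le_abs x)
  linarith

lemma abs_sinh_le_exp_abs (x : ℝ) : |Real.sinh x| ≤ Real.exp |x| := by
  rw [abs_le, Real.sinh_eq]
  have h1 := (Real.exp_pos x).le
  have h2 := (Real.exp_pos (-x)).le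
  have h3 : Real.exp x ≤ Real.exp |x| := Real.exp_le_exp.2 (le_abs_self x)
  have h4 : Real.exp (-x) ≤ Real.exp |x| := Real.exp_le_exp.2 (neg_le_abs x)
  constructor <;> nlinarith

lemma abs_sinh_le_cosh (x : ℝ) : |Real.sinh x| ≤ Real.cosh x := by
  rw [abs_le, Real.sinh_eq, Real.cosh_eq]
  have h1 := (Real.exp_pos x).le
  have h2 := (Real.exp_pos (-x)).le
  constructor <;> nlinarith

lemma sq_div_eight_le_cosh {t : ℝ} (ht : 0 ≤ t) : t ^ 2 / 8 ≤ Real.cosh t := by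
  have e1 : t / 2 + 1 ≤ Real.exp (t / 2) := Real.add_one_le_exp _
  have e2 : Real.exp (t / 2) * Real.exp (t / 2) = Real.exp t := by
    rw [← Real.exp_add]; ring_nf
  have h2 := (Real.exp_pos (-t)).le
  rw [Real.cosh_eq]
  nlinarith [Real.exp_pos (t / 2)]

lemma exp_cosh_bound {z : ℝ} (c : ℝ) (hz : 0 < z) {t : ℝ} (ht : 0 ≤ t) :
    Real.exp (-z * Real.cosh t) * Real.exp (c * t)
      ≤ Real.exp (2 * (c + 1) ^ 2 / z) * Real.exp (-t) := by
  rw [← Real.exp_add, ← Real.exp_add]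
  apply Real.exp_le_exp.2
  have hc := sq_div_eight_le_cosh ht
  rw [← sub_nonneg]
  have key : 0 ≤ (z * t - 4 * (c + 1)) ^ 2 := sq_nonneg _
  have h8 : z * (t ^ 2 / 8) ≤ z * Real.cosh t := by nlinarith
  rw [show 2 * (c + 1) ^ 2 / z + -t - (-z * Real.cosh t + c * t)
      = (2 * (c + 1) ^ 2 / z) + (z * Real.cosh t - (c + 1) * t) by ring]
  have hd : 0 ≤ 2 * (c + 1) ^ 2 / z := by positivity
  have : (c + 1) * t - z * Real.cosh t ≤ 2 * (c + 1) ^ 2 / z := by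
    rw [le_div_iff₀ hz]
    nlinarith
  linarith

lemma integrableOn_exp_cosh_mul {z c C : ℝ} (hz : 0 < z) {g : ℝ → ℝ}
    (hg : Continuous g) (hgb : ∀ t, 0 ≤ t → |g t| ≤ C * Real.exp (c * t)) :
    IntegrableOn (fun t => Real.exp (-z * Real.cosh t) * g t) (Ioi (0 : ℝ)) := by
  have hC : 0 ≤ C := by
    have h := hgb 0 le_rfl
    simp only [mul_zero, Real.exp_zero, mul_one] at h
    exact le_trans (abs_nonneg _) h
  refine Integrable.mono' ((exp_neg_integrableOn_Ioi 0 one_pos).const_mul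
      (C * Real.exp (2 * (c + 1) ^ 2 / z))) ?_ ?_
  · exact ((Real.continuous_exp.comp
      (continuous_const.mul Real.continuous_cosh)).mul hg).aestronglyMeasurable.restrict
  · filter_upwards [ae_restrict_mem measurableSet_Ioi] with t ht
    have ht' : (0 : ℝ) ≤ t := le_of_lt ht
    rw [Real.norm_eq_abs, abs_mul, Real.abs_exp]
    calc Real.exp (-z * Real.cosh t) * |g t|
        ≤ Real.exp (-z * Real.cosh t) * (C * Real.exp (c * t)) := by
          exact mul_le_mul_of_nonneg_left (hgb t ht') (Real.exp_pos _).le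
      _ = C * (Real.exp (-z * Real.cosh t) * Real.exp (c * t)) := by ring
      _ ≤ C * (Real.exp (2 * (c + 1) ^ 2 / z) * Real.exp (-t)) := by
          exact mul_le_mul_of_nonneg_left (exp_cosh_bound c hz ht') hC
      _ = C * Real.exp (2 * (c + 1) ^ 2 / z) * Real.exp (-1 * t) := by rw [neg_one_mul]; ring



lemma cosh_mul_bound (ν : ℝ) {t : ℝ} (ht : 0 ≤ t) :
    |Real.cosh (ν * t)| ≤ 1 * Real.exp (|ν| * t) := by
  rw [one_mul, abs_of_pos (Real.cosh_pos _)]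
  calc Real.cosh (ν * t) ≤ Real.exp |ν * t| := cosh_le_exp_abs _
    _ = Real.exp (|ν| * t) := by rw [abs_mul, abs_of_nonneg ht]

lemma sinh_mul_bound (ν : ℝ) {t : ℝ} (ht : 0 ≤ t) :
    |Real.sinh (ν * t)| ≤ Real.exp (|ν| * t) := by
  calc |Real.sinh (ν * t)| ≤ Real.exp |ν * t| := abs_sinh_le_exp_abs _
    _ = Real.exp (|ν| * t) := by rw [abs_mul, abs_of_nonneg ht]

lemma integrable_K (hz : 0 < z) :
    IntegrableOn (fun t => Real.exp (-z * Real.cosh t) * Real.cosh (ν * t)) (Ioi (0:ℝ)) :=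
  integrableOn_exp_cosh_mul hz (by continuity) (fun t ht => cosh_mul_bound ν ht)

lemma integrable_K' (hz : 0 < z) :
    IntegrableOn (fun t => Real.exp (-z * Real.cosh t) * (Real.cosh t * Real.cosh (ν * t)))
      (Ioi (0:ℝ)) := by
  refine integrableOn_exp_cosh_mul (C := 1) (c := |ν| + 1) hz (by continuity) (fun t ht => ?_)
  rw [one_mul, abs_of_pos (mul_pos (Real.cosh_pos _) (Real.cosh_pos _))]
  have h1 : Real.cosh t ≤ Real.exp t := by
    simpa [abs_of_nonneg ht] using cosh_le_exp_abs t
  have h2 : Real.cosh (ν * t) ≤ Real.exp (|ν| * t) := by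
    have := cosh_mul_bound ν ht; rwa [one_mul, abs_of_pos (Real.cosh_pos _)] at this
  calc Real.cosh t * Real.cosh (ν * t) ≤ Real.exp t * Real.exp (|ν| * t) :=
        mul_le_mul h1 h2 (Real.cosh_pos _).le (Real.exp_pos _).le
    _ = Real.exp ((|ν| + 1) * t) := by rw [← Real.exp_add]; ring_nf

lemma integrable_S (hz : 0 < z) :
    IntegrableOn (fun t => Real.exp (-z * Real.cosh t) * (Real.sinh t * Real.sinh (ν * t)))
      (Ioi (0:ℝ)) := by
  refine integrableOn_exp_cosh_mul (C := 1) (c := |ν| + 1) hz (by continuity) (fun t ht => ?_)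
  rw [one_mul, abs_mul]
  have h1 : |Real.sinh t| ≤ Real.exp t := by
    simpa [abs_of_nonneg ht] using abs_sinh_le_exp_abs t
  calc |Real.sinh t| * |Real.sinh (ν * t)| ≤ Real.exp t * Real.exp (|ν| * t) :=
        mul_le_mul h1 (sinh_mul_bound ν ht) (abs_nonneg _) (Real.exp_pos _).le
    _ = Real.exp ((|ν| + 1) * t) := by rw [← Real.exp_add]; ring_nf

lemma integrable_M (hz : 0 < z) :
    IntegrableOn (fun t => Real.exp (-z * Real.cosh t) * ((Real.cosh t - 1) * Real.cosh (ν * t)))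
      (Ioi (0:ℝ)) := by
  refine integrableOn_exp_cosh_mul (C := 1) (c := |ν| + 1) hz (by continuity) (fun t ht => ?_)
  rw [one_mul]
  have hc1 : (0:ℝ) ≤ Real.cosh t - 1 := by linarith [Real.one_le_cosh t]
  rw [abs_of_nonneg (mul_nonneg hc1 (Real.cosh_pos _).le)]
  have h1 : Real.cosh t - 1 ≤ Real.exp t := by
    have := cosh_le_exp_abs t; rw [abs_of_nonneg ht] at this; linarith
  have h2 : Real.cosh (ν * t) ≤ Real.exp (|ν| * t) := by
    have := cosh_mul_bound ν ht; rwa [one_mul, abs_of_pos (Real.cosh_pos _)] at this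
  calc (Real.cosh t - 1) * Real.cosh (ν * t) ≤ Real.exp t * Real.exp (|ν| * t) :=
        mul_le_mul h1 h2 (Real.cosh_pos _).le (Real.exp_pos _).le
    _ = Real.exp ((|ν| + 1) * t) := by rw [← Real.exp_add]; ring_nf

lemma K_pos (ν : ℝ) (hz : 0 < z) : 0 < besselK ν z := by
  rw [besselK]
  rw [setIntegral_pos_iff_support_of_nonneg_ae _ (integrable_K hz)]
  · have hsupp : (Function.support fun t => Real.exp (-z * Real.cosh t) * Real.cosh (ν * t))
        = Set.univ := by
      ext t
      simp only [Function.mem_support, Set.mem_univ, iff_true]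
      positivity
    rw [hsupp, Set.univ_inter, Real.volume_Ioi]
    simp
  · filter_upwards with t
    positivity

lemma hasDerivAt_K (ν : ℝ) (hz : 0 < z) :
    HasDerivAt (besselK ν)
      (-(∫ t in Ioi (0:ℝ), Real.exp (-z * Real.cosh t) * (Real.cosh t * Real.cosh (ν * t)))) z := by
  have h := hasDerivAt_integral_of_dominated_loc_of_deriv_le
      (F := fun y t => Real.exp (-y * Real.cosh t) * Real.cosh (ν * t))
      (F' := fun y t => -Real.cosh t * (Real.exp (-y * Real.cosh t) * Real.cosh (ν * t)))
      (x₀ := z) (μ := volume.restrict (Ioi (0:ℝ)))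
      (bound := fun t => Real.exp (-(z/2) * Real.cosh t) * (Real.cosh t * Real.cosh (ν * t)))
      (Metric.ball_mem_nhds z (half_pos hz))
      (Eventually.of_forall fun y => (Continuous.aestronglyMeasurable (by continuity)).restrict)
      (integrable_K hz)
      (Continuous.aestronglyMeasurable (by continuity)).restrict
      ?_ (integrable_K' (half_pos hz)) ?_
  · have heq : (fun t => -Real.cosh t * (Real.exp (-z * Real.cosh t) * Real.cosh (ν * t)))
        = fun t => -(Real.exp (-z * Real.cosh t) * (Real.cosh t * Real.cosh (ν * t))) := by
      funext t; ring
    have h2 := h.2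
    rw [heq, integral_neg] at h2
    exact h2
  · refine Eventually.of_forall fun t => fun y hy => ?_
    have hy2 : z / 2 ≤ y := by
      rw [Metric.mem_ball, Real.dist_eq, abs_lt] at hy
      linarith
    rw [Real.norm_eq_abs, abs_mul, abs_mul, abs_neg, Real.abs_exp,
      abs_of_pos (Real.cosh_pos _), abs_of_pos (Real.cosh_pos _)]
    have : Real.exp (-y * Real.cosh t) ≤ Real.exp (-(z/2) * Real.cosh t) := by
      apply Real.exp_le_exp.2
      have := Real.cosh_pos t
      nlinarith
    nlinarith [Real.cosh_pos t, Real.cosh_pos (ν * t), Real.exp_pos (-y * Real.cosh t),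
      mul_le_mul_of_nonneg_left this (Real.cosh_pos t).le,
      mul_pos (Real.cosh_pos t) (Real.cosh_pos (ν * t))]
  · refine Eventually.of_forall fun t => fun y hy => ?_
    have h1 : HasDerivAt (fun y : ℝ => -y * Real.cosh t) (-Real.cosh t) y := by
      simpa using ((hasDerivAt_id y).neg.mul_const (Real.cosh t))
    have h2 := h1.exp.mul_const (Real.cosh (ν * t))
    refine h2.congr_deriv ?_
    ring



lemma ibp {z : ℝ} (hz : 0 < z) {ψ ψ' : ℝ → ℝ} (hψ : ∀ t, HasDerivAt ψ (ψ' t) t)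
    (hc' : Continuous ψ') (h0 : ψ 0 = 0) {c C : ℝ}
    (hψb : ∀ t, 0 ≤ t → |ψ t| ≤ C * Real.exp (c * t))
    (hψ'b : ∀ t, 0 ≤ t → |ψ' t| ≤ C * Real.exp (c * t)) :
    ∫ t in Ioi (0:ℝ), Real.exp (-z * Real.cosh t) * (ψ' t - z * Real.sinh t * ψ t) = 0 := by
  have hC : 0 ≤ C := by
    have h := hψb 0 le_rfl
    simp only [mul_zero, Real.exp_zero, mul_one] at h
    exact le_trans (abs_nonneg _) h
  have hψcont : Continuous ψ := by
    rw [continuous_iff_continuousAt]; exact fun t => (hψ t).continuousAt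
  set F : ℝ → ℝ := fun t => Real.exp (-z * Real.cosh t) * ψ t with hF
  have hFd : ∀ t, HasDerivAt F
      (Real.exp (-z * Real.cosh t) * (ψ' t - z * Real.sinh t * ψ t)) t := by
    intro t
    have h1 : HasDerivAt (fun t : ℝ => -z * Real.cosh t) (-z * Real.sinh t) t :=
      (Real.hasDerivAt_cosh t).const_mul (-z)
    have h2 := h1.exp.mul (hψ t)
    refine h2.congr_deriv ?_
    ring
  have hint : IntegrableOn
      (fun t => Real.exp (-z * Real.cosh t) * (ψ' t - z * Real.sinh t * ψ t)) (Ioi (0:ℝ)) := by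
    refine integrableOn_exp_cosh_mul (C := C * (1 + z)) (c := c + 1) hz
      (by continuity) (fun t ht => ?_)
    have b1 := hψb t ht
    have b2 := hψ'b t ht
    have hs : |Real.sinh t| ≤ Real.exp t := by
      simpa [abs_of_nonneg ht] using abs_sinh_le_exp_abs t
    have e1 : Real.exp (c * t) ≤ Real.exp ((c + 1) * t) :=
      Real.exp_le_exp.2 (by nlinarith)
    have e2 : Real.exp t * Real.exp (c * t) = Real.exp ((c + 1) * t) := by
      rw [← Real.exp_add]; ring_nf
    have habs : |ψ' t - z * Real.sinh t * ψ t| ≤ |ψ' t| + z * (|Real.sinh t| * |ψ t|) := by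
      calc |ψ' t - z * Real.sinh t * ψ t| ≤ |ψ' t| + |z * Real.sinh t * ψ t| := abs_sub _ _
        _ = |ψ' t| + z * (|Real.sinh t| * |ψ t|) := by
            rw [abs_mul, abs_mul, abs_of_pos hz]; ring
    have m2 : z * (|Real.sinh t| * |ψ t|) ≤ z * (Real.exp ((c+1) * t) * C) := by
      apply mul_le_mul_of_nonneg_left _ hz.le
      calc |Real.sinh t| * |ψ t| ≤ Real.exp t * (C * Real.exp (c * t)) :=
            mul_le_mul hs b1 (abs_nonneg _) (Real.exp_pos _).le
        _ = Real.exp ((c+1)*t) * C := by rw [← e2]; ring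
    have m1 : |ψ' t| ≤ C * Real.exp ((c+1)*t) :=
      le_trans b2 (mul_le_mul_of_nonneg_left e1 hC)
    calc |ψ' t - z * Real.sinh t * ψ t| ≤ |ψ' t| + z * (|Real.sinh t| * |ψ t|) := habs
      _ ≤ C * Real.exp ((c+1)*t) + z * (Real.exp ((c+1)*t) * C) := add_le_add m1 m2
      _ = C * (1 + z) * Real.exp ((c + 1) * t) := by ring
  have htend : Tendsto F atTop (𝓝 (0:ℝ)) := by
    have hg0 : Tendsto (fun t => C * Real.exp (2 * (c + 1) ^ 2 / z) * Real.exp (-t))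
        atTop (𝓝 (0:ℝ)) := by
      simpa using Real.tendsto_exp_neg_atTop_nhds_zero.const_mul
        (C * Real.exp (2 * (c + 1) ^ 2 / z))
    apply squeeze_zero_norm' ?_ hg0
    · filter_upwards [eventually_ge_atTop (0:ℝ)] with t ht
      simp only [hF, Real.norm_eq_abs, abs_mul, Real.abs_exp]
      calc Real.exp (-z * Real.cosh t) * |ψ t|
          ≤ Real.exp (-z * Real.cosh t) * (C * Real.exp (c * t)) :=
            mul_le_mul_of_nonneg_left (hψb t ht) (Real.exp_pos _).le
        _ = C * (Real.exp (-z * Real.cosh t) * Real.exp (c * t)) := by ring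
        _ ≤ C * (Real.exp (2 * (c + 1) ^ 2 / z) * Real.exp (-t)) :=
            mul_le_mul_of_nonneg_left (exp_cosh_bound c hz ht) hC
        _ = C * Real.exp (2 * (c + 1) ^ 2 / z) * Real.exp (-t) := by ring
  have hres := integral_Ioi_of_hasDerivAt_of_tendsto
    (hFd 0).continuousAt.continuousWithinAt (fun t _ => hFd t) hint htend
  rw [hres]
  simp [hF, h0]

lemma ibp1 (ν : ℝ) (hz : 0 < z) :
    ν * besselK ν z
      = z * ∫ t in Ioi (0:ℝ), Real.exp (-z * Real.cosh t)
          * (Real.sinh t * Real.sinh (ν * t)) := by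
  have hψ : ∀ t : ℝ, HasDerivAt (fun t => Real.sinh (ν * t)) (ν * Real.cosh (ν * t)) t := by
    intro t
    have h1 : HasDerivAt (fun t : ℝ => ν * t) ν t := by
      simpa using (hasDerivAt_id t).const_mul ν
    simpa [mul_comm] using h1.sinh
  have h := ibp (C := 1 + |ν|) (c := |ν|) hz hψ (by continuity) (by simp) ?_ ?_
  · have heq : (fun t => Real.exp (-z * Real.cosh t)
        * (ν * Real.cosh (ν * t) - z * Real.sinh t * Real.sinh (ν * t)))
        = fun t => ν * (Real.exp (-z * Real.cosh t) * Real.cosh (ν * t))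
            - z * (Real.exp (-z * Real.cosh t) * (Real.sinh t * Real.sinh (ν * t))) := by
      funext t; ring
    rw [heq, integral_sub ((integrable_K hz).const_mul ν) ((integrable_S hz).const_mul z),
        integral_const_mul, integral_const_mul] at h
    rw [besselK]
    linarith
  · intro t ht
    calc |Real.sinh (ν * t)| ≤ Real.exp (|ν| * t) := by
          calc |Real.sinh (ν * t)| ≤ Real.exp |ν * t| := abs_sinh_le_exp_abs _
            _ = Real.exp (|ν| * t) := by rw [abs_mul, abs_of_nonneg ht]
      _ ≤ (1 + |ν|) * Real.exp (|ν| * t) := by nlinarith [Real.exp_pos (|ν| * t), abs_nonneg ν]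
  · intro t ht
    rw [abs_mul, abs_of_pos (Real.cosh_pos _)]
    have h2 : Real.cosh (ν * t) ≤ Real.exp (|ν| * t) := by
      calc Real.cosh (ν * t) ≤ Real.exp |ν * t| := cosh_le_exp_abs _
        _ = Real.exp (|ν| * t) := by rw [abs_mul, abs_of_nonneg ht]
    nlinarith [Real.exp_pos (|ν| * t), abs_nonneg ν, Real.cosh_pos (ν * t)]

lemma key1 {ν : ℝ} (hν : 1/2 ≤ ν) (hz : 0 < z) :
    z * ∫ t in Ioi (0:ℝ), Real.exp (-z * Real.cosh t) * ((Real.cosh t - 1) * Real.cosh (ν * t))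
      ≤ ν * besselK ν z := by
  rw [ibp1 ν hz]
  apply mul_le_mul_of_nonneg_left _ hz.le
  apply setIntegral_mono_on (integrable_M hz) (integrable_S hz) measurableSet_Ioi
  intro t _
  have h1 : Real.cosh (t - ν * t)
      = Real.cosh t * Real.cosh (ν * t) - Real.sinh t * Real.sinh (ν * t) :=
    Real.cosh_sub t (ν * t)
  have h2 : Real.cosh (t - ν * t) ≤ Real.cosh (ν * t) := by
    rw [Real.cosh_le_cosh, show t - ν * t = (1 - ν) * t by ring, abs_mul, abs_mul]
    have : |1 - ν| ≤ |ν| := by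
      rw [abs_of_pos (by linarith : (0:ℝ) < ν)]
      rw [abs_le]; constructor <;> linarith
    exact mul_le_mul_of_nonneg_right this (abs_nonneg t)
  have key : (Real.cosh t - 1) * Real.cosh (ν * t) ≤ Real.sinh t * Real.sinh (ν * t) := by
    nlinarith
  exact mul_le_mul_of_nonneg_left key (Real.exp_pos _).le



lemma key2 {ν : ℝ} (hν : 1/2 ≤ ν) (hz : 0 < z) :
    besselK ν z / 2
      ≤ z * ∫ t in Ioi (0:ℝ), Real.exp (-z * Real.cosh t)
          * ((Real.cosh t - 1) * Real.cosh (ν * t)) := by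
  set q : ℝ → ℝ := fun t => Real.sinh (t/2) / Real.cosh (t/2) with hq
  set ψ : ℝ → ℝ := fun t => q t * Real.cosh (ν * t) with hψdef
  set ψ' : ℝ → ℝ :=
    fun t => (1 - q t ^ 2) / 2 * Real.cosh (ν * t) + q t * (ν * Real.sinh (ν * t)) with hψ'def
  have hch : ∀ t : ℝ, Real.cosh (t/2) ≠ 0 := fun t => (Real.cosh_pos _).ne'
  have hhalf : Continuous (fun t : ℝ => t / 2) := continuous_id.div_const 2
  have hqcont : Continuous q :=
    Continuous.div (Real.continuous_sinh.comp hhalf) (Real.continuous_cosh.comp hhalf) hch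
  have hqd : ∀ t, HasDerivAt q ((1 - q t ^ 2) / 2) t := by
    intro t
    have h1 : HasDerivAt (fun t : ℝ => t / 2) (1/2 : ℝ) t := by
      simpa using (hasDerivAt_id t).div_const 2
    have hs : HasDerivAt (fun t : ℝ => Real.sinh (t/2)) (Real.cosh (t/2) * (1/2)) t := h1.sinh
    have hc : HasDerivAt (fun t : ℝ => Real.cosh (t/2)) (Real.sinh (t/2) * (1/2)) t := h1.cosh
    have hd := hs.div hc (hch t)
    have hid := Real.cosh_sq_sub_sinh_sq (t/2)
    refine hd.congr_deriv (Eq.symm ?_)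
    rw [hq]
    field_simp
  have hcν : ∀ t : ℝ, HasDerivAt (fun t => Real.cosh (ν * t)) (ν * Real.sinh (ν * t)) t := by
    intro t
    have h1 : HasDerivAt (fun t : ℝ => ν * t) ν t := by
      simpa using (hasDerivAt_id t).const_mul ν
    simpa [mul_comm] using h1.cosh
  have hψd : ∀ t, HasDerivAt ψ (ψ' t) t := fun t => (hqd t).mul (hcν t)
  -- the pointwise identity sinh t * ψ t = (cosh t - 1) * cosh (ν t)
  have hst : ∀ t : ℝ, Real.sinh t * ψ t = (Real.cosh t - 1) * Real.cosh (ν * t) := by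
    intro t
    have h1 := Real.sinh_two_mul (t/2)
    have h2 := Real.cosh_two_mul (t/2)
    rw [show 2 * (t/2) = t by ring] at h1 h2
    have hid := Real.cosh_sq_sub_sinh_sq (t/2)
    rw [hψdef, hq]
    simp only []
    rw [h1, h2]
    field_simp
    linear_combination (-1 : ℝ) * hid
  -- bounds on q for t ≥ 0
  have hq01 : ∀ t : ℝ, 0 ≤ t → 0 ≤ q t ∧ q t ≤ 1 := by
    intro t ht
    have hs0 : 0 ≤ Real.sinh (t/2) := Real.sinh_nonneg_iff.2 (by linarith)
    have hsc : Real.sinh (t/2) ≤ Real.cosh (t/2) := by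
      have := abs_sinh_le_cosh (t/2); rw [abs_of_nonneg hs0] at this; exact this
    constructor
    · exact div_nonneg hs0 (Real.cosh_pos _).le
    · rw [hq]; exact div_le_one_of_le₀ hsc (Real.cosh_pos _).le
  have hcoshb : ∀ t : ℝ, 0 ≤ t → Real.cosh (ν * t) ≤ Real.exp (|ν| * t) := by
    intro t ht
    calc Real.cosh (ν * t) ≤ Real.exp |ν * t| := cosh_le_exp_abs _
      _ = Real.exp (|ν| * t) := by rw [abs_mul, abs_of_nonneg ht]
  have hsinhb : ∀ t : ℝ, 0 ≤ t → |Real.sinh (ν * t)| ≤ Real.exp (|ν| * t) := by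
    intro t ht
    calc |Real.sinh (ν * t)| ≤ Real.exp |ν * t| := abs_sinh_le_exp_abs _
      _ = Real.exp (|ν| * t) := by rw [abs_mul, abs_of_nonneg ht]
  have hcc : Continuous (fun t : ℝ => Real.cosh (ν * t)) :=
    Real.continuous_cosh.comp (continuous_const.mul continuous_id)
  have hsc : Continuous (fun t : ℝ => Real.sinh (ν * t)) :=
    Real.continuous_sinh.comp (continuous_const.mul continuous_id)
  have hψ'cont : Continuous ψ' := by
    rw [hψ'def]
    exact (((continuous_const.sub (hqcont.pow 2)).div_const 2).mul hcc).add
      (hqcont.mul (continuous_const.mul hsc))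
  have hψ0 : ψ 0 = 0 := by simp [hψdef, hq]
  have h := ibp (C := 1 + |ν|) (c := |ν|) hz hψd hψ'cont hψ0 ?_ ?_
  · -- rewrite the ibp conclusion
    have heq : (fun t => Real.exp (-z * Real.cosh t) * (ψ' t - z * Real.sinh t * ψ t))
        = fun t => Real.exp (-z * Real.cosh t) * ψ' t
            - z * (Real.exp (-z * Real.cosh t) * ((Real.cosh t - 1) * Real.cosh (ν * t))) := by
      funext t
      rw [← hst t]
      ring
    have hintψ' : IntegrableOn (fun t => Real.exp (-z * Real.cosh t) * ψ' t) (Ioi (0:ℝ)) := by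
      refine integrableOn_exp_cosh_mul (C := 1 + |ν|) (c := |ν| + 1) hz hψ'cont
        (fun t ht => ?_)
      obtain ⟨hq0, hq1⟩ := hq01 t ht
      have e1 : Real.exp (|ν| * t) ≤ Real.exp ((|ν| + 1) * t) :=
        Real.exp_le_exp.2 (by nlinarith)
      have b1 := hcoshb t ht
      have b2 := hsinhb t ht
      simp only [hψ'def]
      have habs : |(1 - q t ^ 2) / 2 * Real.cosh (ν * t) + q t * (ν * Real.sinh (ν * t))|
          ≤ (1/2) * Real.cosh (ν * t) + |ν| * |Real.sinh (ν * t)| := by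
        have h1 : |(1 - q t ^ 2) / 2 * Real.cosh (ν * t)| ≤ (1/2) * Real.cosh (ν * t) := by
          rw [abs_mul, abs_of_pos (Real.cosh_pos _)]
          apply mul_le_mul_of_nonneg_right _ (Real.cosh_pos _).le
          rw [abs_div]
          rw [abs_of_nonneg (by nlinarith : (0:ℝ) ≤ 1 - q t ^ 2)]
          simp only [abs_two]
          nlinarith
        have h2 : |q t * (ν * Real.sinh (ν * t))| ≤ |ν| * |Real.sinh (ν * t)| := by
          rw [abs_mul, abs_mul]
          have : |q t| ≤ 1 := by rw [abs_of_nonneg hq0]; exact hq1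
          exact mul_le_of_le_one_left (by positivity) this
        calc |(1 - q t ^ 2) / 2 * Real.cosh (ν * t) + q t * (ν * Real.sinh (ν * t))|
            ≤ |(1 - q t ^ 2) / 2 * Real.cosh (ν * t)| + |q t * (ν * Real.sinh (ν * t))| :=
              abs_add_le _ _
          _ ≤ (1/2) * Real.cosh (ν * t) + |ν| * |Real.sinh (ν * t)| := add_le_add h1 h2
      calc |(1 - q t ^ 2) / 2 * Real.cosh (ν * t) + q t * (ν * Real.sinh (ν * t))|
          ≤ (1/2) * Real.cosh (ν * t) + |ν| * |Real.sinh (ν * t)| := habs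
        _ ≤ (1/2) * Real.exp (|ν| * t) + |ν| * Real.exp (|ν| * t) := by
            apply add_le_add
            · nlinarith
            · nlinarith [abs_nonneg ν]
        _ ≤ (1 + |ν|) * Real.exp ((|ν| + 1) * t) := by
            nlinarith [Real.exp_pos (|ν| * t), Real.exp_pos ((|ν| + 1) * t), abs_nonneg ν,
              mul_le_mul_of_nonneg_left e1 (abs_nonneg ν)]
    rw [heq, integral_sub hintψ' ((integrable_M hz).const_mul z), integral_const_mul] at h
    -- now h : ∫ exp * ψ' - z * M = 0
    have hKhalf : besselK ν z / 2
        = ∫ t in Ioi (0:ℝ), Real.exp (-z * Real.cosh t) * Real.cosh (ν * t) / 2 := by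
      rw [besselK, integral_div]
    rw [hKhalf]
    have hmono : ∫ t in Ioi (0:ℝ), Real.exp (-z * Real.cosh t) * Real.cosh (ν * t) / 2
        ≤ ∫ t in Ioi (0:ℝ), Real.exp (-z * Real.cosh t) * ψ' t := by
      apply setIntegral_mono_on ((integrable_K hz).div_const 2) hintψ' measurableSet_Ioi
      intro t ht
      have ht' : (0:ℝ) ≤ t := le_of_lt ht
      obtain ⟨hq0, hq1⟩ := hq01 t ht'
      -- pointwise: cosh (ν t) / 2 ≤ ψ' t
      have hqc : q t * Real.cosh (ν * t) ≤ Real.sinh (ν * t) := by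
        have hsub : Real.sinh (t/2 - ν * t) ≤ 0 :=
          Real.sinh_nonpos_iff.2 (by nlinarith)
        rw [Real.sinh_sub] at hsub
        rw [hq, div_mul_eq_mul_div, div_le_iff₀ (Real.cosh_pos _)]
        nlinarith
      have hsν : 0 ≤ Real.sinh (ν * t) := Real.sinh_nonneg_iff.2 (by nlinarith)
      have hpt : Real.cosh (ν * t) / 2 ≤ ψ' t := by
        simp only [hψ'def]
        nlinarith [mul_le_mul_of_nonneg_left hqc hq0, mul_nonneg hq0 hsν]
      calc Real.exp (-z * Real.cosh t) * Real.cosh (ν * t) / 2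
          = Real.exp (-z * Real.cosh t) * (Real.cosh (ν * t) / 2) := by ring
        _ ≤ Real.exp (-z * Real.cosh t) * ψ' t :=
            mul_le_mul_of_nonneg_left hpt (Real.exp_pos _).le
    linarith
  · intro t ht
    obtain ⟨hq0, hq1⟩ := hq01 t ht
    simp only [hψdef]
    rw [abs_mul, abs_of_pos (Real.cosh_pos _), abs_of_nonneg hq0]
    have := hcoshb t ht
    nlinarith [Real.exp_pos (|ν| * t), abs_nonneg ν, Real.cosh_pos (ν * t)]
  · intro t ht
    obtain ⟨hq0, hq1⟩ := hq01 t ht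
    have b1 := hcoshb t ht
    have b2 := hsinhb t ht
    simp only [hψ'def]
    have h1 : |(1 - q t ^ 2) / 2 * Real.cosh (ν * t)| ≤ (1/2) * Real.cosh (ν * t) := by
      rw [abs_mul, abs_of_pos (Real.cosh_pos _)]
      apply mul_le_mul_of_nonneg_right _ (Real.cosh_pos _).le
      rw [abs_div, abs_of_nonneg (by nlinarith : (0:ℝ) ≤ 1 - q t ^ 2)]
      simp only [abs_two]
      nlinarith
    have h2 : |q t * (ν * Real.sinh (ν * t))| ≤ |ν| * |Real.sinh (ν * t)| := by
      rw [abs_mul, abs_mul]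
      have : |q t| ≤ 1 := by rw [abs_of_nonneg hq0]; exact hq1
      exact mul_le_of_le_one_left (by positivity) this
    calc |(1 - q t ^ 2) / 2 * Real.cosh (ν * t) + q t * (ν * Real.sinh (ν * t))|
        ≤ (1/2) * Real.cosh (ν * t) + |ν| * |Real.sinh (ν * t)| :=
          le_trans (abs_add_le _ _) (add_le_add h1 h2)
      _ ≤ (1 + |ν|) * Real.exp (|ν| * t) := by
          nlinarith [Real.exp_pos (|ν| * t), abs_nonneg ν,
            mul_le_mul_of_nonneg_left b2 (abs_nonneg ν)]



/-- `J z - K z = M z`. -/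
lemma JKM (ν : ℝ) {z : ℝ} (hz : 0 < z) :
    (∫ t in Ioi (0:ℝ), Real.exp (-z * Real.cosh t) * (Real.cosh t * Real.cosh (ν * t)))
      - besselK ν z
    = ∫ t in Ioi (0:ℝ), Real.exp (-z * Real.cosh t) * ((Real.cosh t - 1) * Real.cosh (ν * t)) := by
  rw [besselK, ← integral_sub (integrable_K' hz) (integrable_K hz)]
  congr 1
  funext t
  ring

lemma deriv_aux {p : ℝ} (hz : 0 < z) (ν : ℝ) :
    HasDerivAt (fun z => z ^ p * (Real.exp z * besselK ν z))
      (p * z ^ (p - 1) * (Real.exp z * besselK ν z)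
        + z ^ p * (Real.exp z * besselK ν z
            + Real.exp z * (-(∫ t in Ioi (0:ℝ),
                Real.exp (-z * Real.cosh t) * (Real.cosh t * Real.cosh (ν * t)))))) z :=
  (Real.hasDerivAt_rpow_const (Or.inl hz.ne')).mul
    ((Real.hasDerivAt_exp z).mul (hasDerivAt_K ν hz))

lemma mono_up {ν : ℝ} (hν : 1/2 ≤ ν) :
    MonotoneOn (fun z => z ^ ν * (Real.exp z * besselK ν z)) (Ioi (0:ℝ)) := by
  apply monotoneOn_of_deriv_nonneg (convex_Ioi 0)
  · exact fun z hz => ((deriv_aux hz ν).continuousAt).continuousWithinAt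
  · rw [interior_Ioi]
    exact fun z hz => ((deriv_aux hz ν).differentiableAt).differentiableWithinAt
  · rw [interior_Ioi]
    intro z hz
    rw [(deriv_aux hz ν).deriv]
    set K := besselK ν z with hK
    set J := ∫ t in Ioi (0:ℝ), Real.exp (-z * Real.cosh t) * (Real.cosh t * Real.cosh (ν * t))
      with hJ
    have hMk := key1 hν hz
    rw [← JKM ν hz] at hMk
    have hKpos := K_pos ν hz
    have hfin : 0 ≤ ν * K + z * K - z * J := by nlinarith
    have hzν : z ^ ν = z ^ (ν - 1) * z := by
      rw [← Real.rpow_add_one hz.ne' (ν - 1)]; norm_num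
    have hP : (0:ℝ) < z ^ (ν - 1) := Real.rpow_pos_of_pos hz _
    rw [hzν]
    calc (0:ℝ) ≤ z ^ (ν - 1) * (Real.exp z * (ν * K + z * K - z * J)) := by positivity
      _ = ν * z ^ (ν - 1) * (Real.exp z * K)
          + z ^ (ν - 1) * z * (Real.exp z * K + Real.exp z * -J) := by ring

lemma mono_down {ν : ℝ} (hν : 1/2 ≤ ν) :
    AntitoneOn (fun z => z ^ (1/2 : ℝ) * (Real.exp z * besselK ν z)) (Ioi (0:ℝ)) := by
  apply antitoneOn_of_deriv_nonpos (convex_Ioi 0)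
  · exact fun z hz => ((deriv_aux hz ν).continuousAt).continuousWithinAt
  · rw [interior_Ioi]
    exact fun z hz => ((deriv_aux hz ν).differentiableAt).differentiableWithinAt
  · rw [interior_Ioi]
    intro z hz
    rw [(deriv_aux hz ν).deriv]
    set K := besselK ν z with hK
    set J := ∫ t in Ioi (0:ℝ), Real.exp (-z * Real.cosh t) * (Real.cosh t * Real.cosh (ν * t))
      with hJ
    have hMk := key2 hν hz
    rw [← JKM ν hz] at hMk
    have hKpos := K_pos ν hz
    have hfin : (1/2 : ℝ) * K + z * K - z * J ≤ 0 := by nlinarith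
    have hzν : z ^ (1/2 : ℝ) = z ^ ((1:ℝ)/2 - 1) * z := by
      rw [← Real.rpow_add_one hz.ne' ((1:ℝ)/2 - 1)]; norm_num
    have hP : (0:ℝ) < z ^ ((1:ℝ)/2 - 1) := Real.rpow_pos_of_pos hz _
    rw [hzν]
    calc (1:ℝ)/2 * z ^ ((1:ℝ)/2 - 1) * (Real.exp z * K)
          + z ^ ((1:ℝ)/2 - 1) * z * (Real.exp z * K + Real.exp z * -J)
        = z ^ ((1:ℝ)/2 - 1) * (Real.exp z * ((1/2 : ℝ) * K + z * K - z * J)) := by ring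
      _ ≤ 0 := by
          apply mul_nonpos_of_nonneg_of_nonpos hP.le
          exact mul_nonpos_of_nonneg_of_nonpos (Real.exp_pos z).le hfin

lemma K_ratio_upper {ν : ℝ} (hν : 1/2 ≤ ν) {z w : ℝ} (hz : 0 < z) (hw : z ≤ w) :
    besselK ν w ≤ (z / w) ^ (1/2 : ℝ) * Real.exp (z - w) * besselK ν z := by
  have hw0 : 0 < w := lt_of_lt_of_le hz hw
  have h := mono_down hν (mem_Ioi.2 hz) (mem_Ioi.2 hw0) hw
  simp only [] at h
  have hpos : 0 < w ^ (1/2 : ℝ) * Real.exp w := by positivity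
  rw [show (z / w) ^ (1/2 : ℝ) * Real.exp (z - w) * besselK ν z
      = (z ^ (1/2 : ℝ) * (Real.exp z * besselK ν z)) / (w ^ (1/2 : ℝ) * Real.exp w) by
    rw [Real.div_rpow hz.le hw0.le, Real.exp_sub]; ring]
  rw [le_div_iff₀ hpos]
  calc besselK ν w * (w ^ (1/2:ℝ) * Real.exp w)
      = w ^ (1/2:ℝ) * (Real.exp w * besselK ν w) := by ring
    _ ≤ z ^ (1/2:ℝ) * (Real.exp z * besselK ν z) := h

lemma K_ratio_lower {ν : ℝ} (hν : 1/2 ≤ ν) {z w : ℝ} (hz : 0 < z) (hw : z ≤ w) :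
    (z / w) ^ ν * Real.exp (z - w) * besselK ν z ≤ besselK ν w := by
  have hw0 : 0 < w := lt_of_lt_of_le hz hw
  have h := mono_up hν (mem_Ioi.2 hz) (mem_Ioi.2 hw0) hw
  simp only [] at h
  have hpos : 0 < w ^ ν * Real.exp w := by positivity
  rw [show (z / w) ^ ν * Real.exp (z - w) * besselK ν z
      = (z ^ ν * (Real.exp z * besselK ν z)) / (w ^ ν * Real.exp w) by
    rw [Real.div_rpow hz.le hw0.le, Real.exp_sub]; ring]
  rw [div_le_iff₀ hpos]
  calc z ^ ν * (Real.exp z * besselK ν z) ≤ w ^ ν * (Real.exp w * besselK ν w) := h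
    _ = besselK ν w * (w ^ ν * Real.exp w) := by ring


end StmtAux

open StmtAux in
/-- Two-sided bound `Γ(n-1)(a/x)^ν (x-a)^{-(n-1)} ≤ ∫₀^∞ (K_ν(rx)/K_ν(ra)) r^{n-2} dr
≤ Γ(n-1)(a/x)^{1/2} (x-a)^{-(n-1)}` for `ν = (n-1)/2`, `n ≥ 2`, `0 < a < x`;
in particular the integral is asymptotic to `Γ(n-1)(x-a)^{-(n-1)}` as `x → a⁺`. -/
theorem stmt_10 (n : ℕ) (hn : 2 ≤ n) (a x : ℝ) (ha : 0 < a) (hx : a < x) :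
    Real.Gamma ((n : ℝ) - 1) * (a / x) ^ (((n : ℝ) - 1) / 2) * (x - a) ^ (-((n : ℝ) - 1))
        ≤ (∫ r in Ioi (0:ℝ),
            besselK (((n : ℝ) - 1) / 2) (r * x) / besselK (((n : ℝ) - 1) / 2) (r * a)
              * r ^ ((n : ℝ) - 2)) ∧
    (∫ r in Ioi (0:ℝ),
        besselK (((n : ℝ) - 1) / 2) (r * x) / besselK (((n : ℝ) - 1) / 2) (r * a)
          * r ^ ((n : ℝ) - 2))
      ≤ Real.Gamma ((n : ℝ) - 1) * (a / x) ^ ((1 : ℝ) / 2) * (x - a) ^ (-((n : ℝ) - 1)) := by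
  set ν : ℝ := ((n : ℝ) - 1) / 2 with hνdef
  have hn2 : (2:ℝ) ≤ (n:ℝ) := by exact_mod_cast hn
  have hν : 1/2 ≤ ν := by rw [hνdef]; linarith
  have hb : 0 < x - a := sub_pos.2 hx
  have hx0 : 0 < x := lt_trans ha hx
  set b : ℝ := x - a with hbdef
  set f : ℝ → ℝ := fun r => besselK ν (r * x) / besselK ν (r * a) * r ^ ((n:ℝ) - 2) with hfdef
  set g : ℝ → ℝ := fun r => r ^ ((n:ℝ) - 2) * Real.exp (-(b * r)) with hgdef
  have hax : 0 < a / x := div_pos ha hx0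
  -- integrability of g
  have hgint : IntegrableOn g (Ioi (0:ℝ)) := by
    have h := integrableOn_rpow_mul_exp_neg_mul_rpow
      (s := (n:ℝ) - 2) (p := 1) (b := b) (by linarith) zero_lt_one hb
    apply h.congr_fun _ measurableSet_Ioi
    intro r hr
    rw [hgdef]
    simp only [Real.rpow_one]
    ring_nf
  -- value of ∫ g
  have hgval : ∫ r in Ioi (0:ℝ), g r = Real.Gamma ((n:ℝ) - 1) * b ^ (-((n:ℝ) - 1)) := by
    have h := Real.integral_rpow_mul_exp_neg_mul_Ioi
      (a := (n:ℝ) - 1) (r := b) (by linarith) hb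
    rw [show ((n:ℝ) - 1) - 1 = (n:ℝ) - 2 by ring] at h
    have h2 : ((1:ℝ)/b) ^ ((n:ℝ) - 1) = b ^ (-((n:ℝ) - 1)) := by
      rw [Real.rpow_neg hb.le, ← Real.inv_rpow hb.le, one_div]
    rw [hgdef]
    simp only []
    rw [h, h2]
    ring
  -- pointwise bounds
  have hub : ∀ r ∈ Ioi (0:ℝ), f r ≤ (a/x) ^ ((1:ℝ)/2) * g r := by
    intro r hr
    rw [mem_Ioi] at hr
    have hz : 0 < r * a := mul_pos hr ha
    have hw : r * a ≤ r * x := mul_le_mul_of_nonneg_left hx.le hr.le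
    have h := K_ratio_upper hν hz hw
    rw [mul_div_mul_left a x hr.ne', show r * a - r * x = -(b * r) by rw [hbdef]; ring] at h
    have hKa := K_pos ν hz
    have hrp : (0:ℝ) ≤ r ^ ((n:ℝ) - 2) := (Real.rpow_pos_of_pos hr _).le
    rw [hfdef, hgdef]
    simp only []
    rw [div_mul_eq_mul_div, div_le_iff₀ hKa]
    calc besselK ν (r * x) * r ^ ((n:ℝ) - 2)
        ≤ ((a/x) ^ ((1:ℝ)/2) * Real.exp (-(b * r)) * besselK ν (r * a)) * r ^ ((n:ℝ) - 2) := by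
          apply mul_le_mul_of_nonneg_right _ hrp
          simpa using h
      _ = (a/x) ^ ((1:ℝ)/2) * (r ^ ((n:ℝ) - 2) * Real.exp (-(b * r))) * besselK ν (r * a) := by
          ring
  have hlb : ∀ r ∈ Ioi (0:ℝ), (a/x) ^ ν * g r ≤ f r := by
    intro r hr
    rw [mem_Ioi] at hr
    have hz : 0 < r * a := mul_pos hr ha
    have hw : r * a ≤ r * x := mul_le_mul_of_nonneg_left hx.le hr.le
    have h := K_ratio_lower hν hz hw
    rw [mul_div_mul_left a x hr.ne', show r * a - r * x = -(b * r) by rw [hbdef]; ring] at h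
    have hKa := K_pos ν hz
    have hrp : (0:ℝ) ≤ r ^ ((n:ℝ) - 2) := (Real.rpow_pos_of_pos hr _).le
    rw [hfdef, hgdef]
    simp only []
    rw [div_mul_eq_mul_div, le_div_iff₀ hKa]
    calc (a/x) ^ ν * (r ^ ((n:ℝ) - 2) * Real.exp (-(b * r))) * besselK ν (r * a)
        = ((a/x) ^ ν * Real.exp (-(b * r)) * besselK ν (r * a)) * r ^ ((n:ℝ) - 2) := by ring
      _ ≤ besselK ν (r * x) * r ^ ((n:ℝ) - 2) := mul_le_mul_of_nonneg_right h hrp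
  have hf0 : ∀ r ∈ Ioi (0:ℝ), 0 ≤ f r := by
    intro r hr
    rw [mem_Ioi] at hr
    have hz : 0 < r * a := mul_pos hr ha
    have hw : 0 < r * x := mul_pos hr hx0
    rw [hfdef]
    simp only []
    exact mul_nonneg (div_nonneg (K_pos ν hw).le (K_pos ν hz).le)
      (Real.rpow_pos_of_pos hr _).le
  -- measurability of f
  have hfmeas : ContinuousOn f (Ioi (0:ℝ)) := by
    have hcx : ∀ y ∈ Ioi (0:ℝ), ContinuousWithinAt (fun r : ℝ => besselK ν (r * x)) (Ioi 0) y := by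
      intro y hy
      rw [mem_Ioi] at hy
      exact (ContinuousAt.comp (g := besselK ν) (f := fun r : ℝ => r * x)
        ((hasDerivAt_K ν (mul_pos hy hx0)).continuousAt)
        ((continuous_mul_right x).continuousAt)).continuousWithinAt
    have hca : ∀ y ∈ Ioi (0:ℝ), ContinuousWithinAt (fun r : ℝ => besselK ν (r * a)) (Ioi 0) y := by
      intro y hy
      rw [mem_Ioi] at hy
      exact (ContinuousAt.comp (g := besselK ν) (f := fun r : ℝ => r * a)
        ((hasDerivAt_K ν (mul_pos hy ha)).continuousAt)
        ((continuous_mul_right a).continuousAt)).continuousWithinAt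
    have h1 : ContinuousOn (fun r : ℝ => besselK ν (r * x) / besselK ν (r * a)) (Ioi 0) :=
      ContinuousOn.div hcx hca (fun y hy => (K_pos ν (mul_pos (mem_Ioi.1 hy) ha)).ne')
    have h2 : ContinuousOn (fun r : ℝ => r ^ ((n:ℝ) - 2)) (Ioi 0) := fun y hy =>
      (Real.continuousAt_rpow_const y _ (Or.inl (mem_Ioi.1 hy).ne')).continuousWithinAt
    exact h1.mul h2
  have hfint : IntegrableOn f (Ioi (0:ℝ)) := by
    apply Integrable.mono' (hgint.const_mul ((a/x) ^ ((1:ℝ)/2)))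
      (hfmeas.aestronglyMeasurable measurableSet_Ioi)
    filter_upwards [ae_restrict_mem measurableSet_Ioi] with r hr
    rw [Real.norm_eq_abs, abs_of_nonneg (hf0 r hr)]
    exact hub r hr
  constructor
  · calc Real.Gamma ((n : ℝ) - 1) * (a / x) ^ (((n : ℝ) - 1) / 2) * (x - a) ^ (-((n : ℝ) - 1))
        = (a/x) ^ ν * ∫ r in Ioi (0:ℝ), g r := by rw [hgval, ← hbdef, ← hνdef]; ring
      _ = ∫ r in Ioi (0:ℝ), (a/x) ^ ν * g r := by rw [integral_const_mul]
      _ ≤ ∫ r in Ioi (0:ℝ), f r :=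
          setIntegral_mono_on (hgint.const_mul _) hfint measurableSet_Ioi hlb
  · calc (∫ r in Ioi (0:ℝ), f r)
        ≤ ∫ r in Ioi (0:ℝ), (a/x) ^ ((1:ℝ)/2) * g r :=
          setIntegral_mono_on hfint (hgint.const_mul _) measurableSet_Ioi hub
      _ = (a/x) ^ ((1:ℝ)/2) * ∫ r in Ioi (0:ℝ), g r := by rw [integral_const_mul]
      _ = Real.Gamma ((n : ℝ) - 1) * (a / x) ^ ((1:ℝ)/2) * (x - a) ^ (-((n : ℝ) - 1)) := by
          rw [hgval, ← hbdef]; ring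
end

section
/- Let n = 3 (so ν = 1) and a > 0. Define w(v) = a^{−2} ∫₀^∞ u e^{−vu} / (K_1(u)² + π² I_1(u)²) du for v ≥ 0. Then w is well-defined (the integral converges for every v ≥ 0), w is nonnegative, continuous, and bounded on [0, ∞), and ∫₀^∞ v^{k} w(v) dv < ∞ for k = 0, 1, 2. -/
open Real MeasureTheory Set

/-- The boundary limit density `w(v) = a^{-2} ∫₀^∞ u e^{-vu}/(K_1(u)² + π² I_1(u)²) du`
for `H³`. -/
noncomputable def w3 (a v : ℝ) : ℝ :=
  a ^ (-2 : ℤ) *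
    ∫ u in Ioi (0:ℝ), u * Real.exp (-(v * u)) / (besselK 1 u ^ 2 + π ^ 2 * besselI 1 u ^ 2)

set_option maxHeartbeats 1000000

namespace Aux16

noncomputable def Dd (u : ℝ) : ℝ := besselK 1 u ^ 2 + π ^ 2 * besselI 1 u ^ 2

lemma Dd_nonneg (u : ℝ) : 0 ≤ Dd u := by unfold Dd; positivity

lemma self_le_exp_half {u : ℝ} (hu : 0 ≤ u) : u ≤ Real.exp (u / 2) := by
  have h1 : Real.exp (u / 2) = Real.exp (u / 4) * Real.exp (u / 4) := by
    rw [← Real.exp_add]; ring_nf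
  nlinarith [Real.add_one_le_exp (u / 4), Real.exp_pos (u / 4), sq_nonneg (u / 4 - 1)]

lemma cosh_le_exp {t : ℝ} (ht : 0 ≤ t) : Real.cosh t ≤ Real.exp t := by
  rw [Real.cosh_eq]
  have : Real.exp (-t) ≤ Real.exp t := Real.exp_le_exp.2 (by linarith)
  linarith

lemma exp_half_le_cosh (t : ℝ) : Real.exp t / 2 ≤ Real.cosh t := by
  rw [Real.cosh_eq]
  have := (Real.exp_pos (-t)).le
  linarith

lemma kint {u : ℝ} (hu : 0 < u) :
    IntegrableOn (fun t => Real.exp (-u * Real.cosh t) * Real.cosh t) (Ioi 0) := by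
  have hbound : IntegrableOn
      (fun t => (4 / u * Real.exp (-(u / 4))) * Real.exp (-(u / 4) * t)) (Ioi 0) :=
    (exp_neg_integrableOn_Ioi 0 (by positivity)).const_mul _
  apply Integrable.mono' hbound
  · exact (((Real.continuous_exp.comp ((continuous_const.mul Real.continuous_cosh))).mul
      Real.continuous_cosh)).aestronglyMeasurable
  · filter_upwards [ae_restrict_mem measurableSet_Ioi] with t ht
    have ht : (0:ℝ) < t := ht
    have hch : 0 < Real.cosh t := Real.cosh_pos t
    rw [Real.norm_of_nonneg (by positivity)]
    have h1 : Real.exp (-u * Real.cosh t) * Real.cosh t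
        ≤ Real.exp (-(u / 2) * Real.exp t) * Real.exp t := by
      apply mul_le_mul _ (cosh_le_exp ht.le) hch.le (Real.exp_pos _).le
      apply Real.exp_le_exp.2
      have := exp_half_le_cosh t
      nlinarith
    refine h1.trans ?_
    have hsplit : Real.exp (-(u / 2) * Real.exp t)
        = Real.exp (-(u / 4) * Real.exp t) * Real.exp (-(u / 4) * Real.exp t) := by
      rw [← Real.exp_add]; ring_nf
    rw [hsplit]
    have h2 : Real.exp t * Real.exp (-(u / 4) * Real.exp t) ≤ 4 / u := by
      have hy := Real.add_one_le_exp (u / 4 * Real.exp t)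
      rw [show -(u / 4) * Real.exp t = -(u / 4 * Real.exp t) by ring, Real.exp_neg,
        ← div_eq_mul_inv, div_le_div_iff₀ (Real.exp_pos _) hu]
      nlinarith [Real.exp_pos t, Real.exp_pos (u / 4 * Real.exp t)]
    have h3 : Real.exp (-(u / 4) * Real.exp t) ≤ Real.exp (-(u / 4)) * Real.exp (-(u / 4) * t) := by
      rw [← Real.exp_add]
      apply Real.exp_le_exp.2
      have := Real.add_one_le_exp t
      nlinarith
    calc Real.exp (-(u / 4) * Real.exp t) * Real.exp (-(u / 4) * Real.exp t) * Real.exp t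
        = (Real.exp t * Real.exp (-(u / 4) * Real.exp t)) * Real.exp (-(u / 4) * Real.exp t) := by
          ring
      _ ≤ (4 / u) * (Real.exp (-(u / 4)) * Real.exp (-(u / 4) * t)) := by
          apply mul_le_mul h2 h3 (Real.exp_pos _).le (by positivity)
      _ = 4 / u * Real.exp (-(u / 4)) * Real.exp (-(u / 4) * t) := by ring

lemma K_ge_on {u T : ℝ} (hu : 0 < u) (hT : 0 < T) :
    Real.exp (-u * Real.cosh T) * Real.sinh T ≤ besselK 1 u := by
  unfold besselK
  simp only [one_mul]
  have hint := kint hu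
  have hnn : 0 ≤ᵐ[volume.restrict (Ioi (0:ℝ))]
      fun t => Real.exp (-u * Real.cosh t) * Real.cosh t := by
    filter_upwards with t
    positivity
  have h1 : ∫ t in Ioc (0:ℝ) T, Real.exp (-u * Real.cosh t) * Real.cosh t
      ≤ ∫ t in Ioi (0:ℝ), Real.exp (-u * Real.cosh t) * Real.cosh t :=
    setIntegral_mono_set hint hnn (HasSubset.Subset.eventuallyLE Ioc_subset_Ioi_self)
  have hcont : Continuous fun t : ℝ => Real.exp (-u * Real.cosh T) * Real.cosh t :=
    continuous_const.mul Real.continuous_cosh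
  have h2 : ∫ t in Ioc (0:ℝ) T, Real.exp (-u * Real.cosh T) * Real.cosh t
      ≤ ∫ t in Ioc (0:ℝ) T, Real.exp (-u * Real.cosh t) * Real.cosh t := by
    apply setIntegral_mono_on
    · exact (hcont.continuousOn.integrableOn_compact isCompact_Icc).mono_set Ioc_subset_Icc_self
    · exact hint.mono_set Ioc_subset_Ioi_self
    · exact measurableSet_Ioc
    · intro t htm
      have hcc : Real.cosh t ≤ Real.cosh T := by
        rw [Real.cosh_le_cosh, abs_of_pos htm.1, abs_of_pos hT]
        exact htm.2
      have : Real.exp (-u * Real.cosh T) ≤ Real.exp (-u * Real.cosh t) :=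
        Real.exp_le_exp.2 (by nlinarith)
      exact mul_le_mul_of_nonneg_right this (Real.cosh_pos t).le
  refine le_trans (le_of_eq ?_) (h2.trans h1)
  rw [MeasureTheory.integral_const_mul]
  congr 1
  rw [← intervalIntegral.integral_of_le hT.le]
  have hfd := intervalIntegral.integral_eq_sub_of_hasDerivAt
    (f := Real.sinh) (f' := fun t => Real.cosh t) (a := 0) (b := T)
    (fun x _ => Real.hasDerivAt_sinh x) (Real.continuous_cosh.intervalIntegrable 0 T)
  rw [hfd, Real.sinh_zero, sub_zero]

lemma exp_one_bounds : (2.7182818283 : ℝ) < Real.exp 1 ∧ Real.exp 1 < 2.7182818286 :=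
  ⟨Real.exp_one_gt_d9, Real.exp_one_lt_d9⟩

lemma K_lb_all {u : ℝ} (hu : 0 < u) : Real.exp (-(2 * u)) ≤ besselK 1 u := by
  have h := K_ge_on hu one_pos
  have he := exp_one_bounds
  have hie : Real.exp (-1 : ℝ) ≤ 1 := by
    rw [Real.exp_neg]
    rw [inv_le_one_iff₀]
    right
    nlinarith [he.1]
  have hcosh1 : Real.cosh 1 ≤ 2 := by
    rw [Real.cosh_eq]
    nlinarith [he.2, hie]
  have hsinh1 : (1:ℝ) ≤ Real.sinh 1 := by
    rw [Real.sinh_eq]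
    have : Real.exp (-1:ℝ) ≤ 1 / 2 := by
      rw [Real.exp_neg, inv_le_comm₀ (Real.exp_pos 1) (by norm_num)]
      nlinarith [he.1]
    nlinarith [he.1]
  calc Real.exp (-(2 * u)) = Real.exp (-(2 * u)) * 1 := by ring
    _ ≤ Real.exp (-u * Real.cosh 1) * Real.sinh 1 := by
        apply mul_le_mul _ hsinh1 one_pos.le (Real.exp_pos _).le
        apply Real.exp_le_exp.2
        nlinarith
    _ ≤ besselK 1 u := h

lemma K_lb_small {u : ℝ} (h0 : 0 < u) (h1 : u ≤ 1) :
    Real.exp (-(5 / 4)) / (2 * u) ≤ besselK 1 u := by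
  set T := Real.log (2 / u) with hT
  have h2u : (1:ℝ) < 2 / u := by
    rw [lt_div_iff₀ h0]; linarith
  have hTpos : 0 < T := Real.log_pos h2u
  have h := K_ge_on h0 hTpos
  have hcT : Real.cosh T = (2 / u + u / 2) / 2 := by
    rw [hT, Real.cosh_log (by positivity)]
    congr 2
    rw [inv_div]
  have hsT : Real.sinh T = (2 / u - u / 2) / 2 := by
    rw [hT, Real.sinh_log (by positivity)]
    congr 2
    rw [inv_div]
  refine le_trans ?_ h
  rw [hcT, hsT]
  have huc : -u * ((2 / u + u / 2) / 2) = -(1 + u ^ 2 / 4) := by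
    field_simp; ring
  rw [huc]
  have he1 : Real.exp (-(1 + u ^ 2 / 4)) ≥ Real.exp (-(5 / 4)) :=
    Real.exp_le_exp.2 (by nlinarith)
  have hs1 : (2 / u - u / 2) / 2 ≥ 1 / (2 * u) := by
    rw [ge_iff_le, div_le_div_iff₀ (by positivity) (by norm_num : (0:ℝ) < 2)]
    have h2 : (2 / u - u / 2) * (2 * u) = 4 - u ^ 2 := by field_simp; ring
    nlinarith
  calc Real.exp (-(5 / 4)) / (2 * u) = Real.exp (-(5 / 4)) * (1 / (2 * u)) := by ring
    _ ≤ Real.exp (-(1 + u ^ 2 / 4)) * ((2 / u - u / 2) / 2) := by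
        apply mul_le_mul he1 hs1 (by positivity) (Real.exp_pos _).le

lemma I_eq (u : ℝ) :
    besselI 1 u = (1 / π) * ∫ θ in Ioo (0:ℝ) π, Real.exp (u * Real.cos θ) * Real.cos θ := by
  unfold besselI
  simp [Real.sin_pi]

lemma exp_two_lb : (7.29 : ℝ) ≤ Real.exp 2 := by
  have h := Real.exp_one_gt_d9
  have : Real.exp 2 = Real.exp 1 * Real.exp 1 := by rw [← Real.exp_add]; norm_num
  nlinarith

lemma I_lb {u : ℝ} (hu : 3 ≤ u) : 1 / 12 * Real.exp (u / 2) ≤ besselI 1 u := by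
  have hu0 : (0:ℝ) ≤ u := by linarith
  rw [I_eq]
  set f : ℝ → ℝ := fun θ => Real.exp (u * Real.cos θ) * Real.cos θ with hf
  have hfc : Continuous f := (Real.continuous_exp.comp
    (continuous_const.mul Real.continuous_cos)).mul Real.continuous_cos
  have hii : ∀ a b : ℝ, IntervalIntegrable f volume a b := fun a b =>
    hfc.intervalIntegrable a b
  have hIoo : ∫ θ in Ioo (0:ℝ) π, f θ = ∫ θ in (0:ℝ)..π, f θ := by
    rw [intervalIntegral.integral_of_le Real.pi_pos.le, integral_Ioc_eq_integral_Ioo]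
  have hsplit1 : ∫ θ in (0:ℝ)..π, f θ
      = (∫ θ in (0:ℝ)..(π/2), f θ) + ∫ θ in (π/2)..π, f θ :=
    (intervalIntegral.integral_add_adjacent_intervals (hii _ _) (hii _ _)).symm
  have hsplit2 : ∫ θ in (0:ℝ)..(π/2), f θ
      = (∫ θ in (0:ℝ)..(π/4), f θ) + ∫ θ in (π/4)..(π/2), f θ :=
    (intervalIntegral.integral_add_adjacent_intervals (hii _ _) (hii _ _)).symm
  have hpi : 0 < π := Real.pi_pos
  -- lower bound on [0, π/4]
  have hb1 : π / 4 * (7 / 10 * Real.exp (7 / 10 * u)) ≤ ∫ θ in (0:ℝ)..(π/4), f θ := by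
    have hc : ∫ θ in (0:ℝ)..(π/4), (7 / 10 * Real.exp (7 / 10 * u))
        = π / 4 * (7 / 10 * Real.exp (7 / 10 * u)) := by
      rw [intervalIntegral.integral_const]
      simp [smul_eq_mul]
    rw [← hc]
    apply intervalIntegral.integral_mono_on (by positivity) (intervalIntegrable_const) (hii _ _)
    intro θ hθ
    have hcos : 7 / 10 ≤ Real.cos θ := by
      have h1 : Real.cos (π/4) ≤ Real.cos θ :=
        Real.cos_le_cos_of_nonneg_of_le_pi hθ.1 (by linarith) hθ.2
      rw [Real.cos_pi_div_four] at h1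
      have hs2 : (1.4:ℝ) ≤ Real.sqrt 2 := by
        nlinarith [Real.sq_sqrt (by norm_num : (2:ℝ) ≥ 0), Real.sqrt_nonneg 2]
      linarith
    have hcos1 : Real.cos θ ≤ 1 := Real.cos_le_one θ
    have hexp : Real.exp (7 / 10 * u) ≤ Real.exp (u * Real.cos θ) :=
      Real.exp_le_exp.2 (by nlinarith)
    calc 7 / 10 * Real.exp (7 / 10 * u) ≤ Real.cos θ * Real.exp (u * Real.cos θ) := by
          apply mul_le_mul hcos hexp (Real.exp_pos _).le (by linarith)
      _ = f θ := by rw [hf]; ring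
  -- nonneg on [π/4, π/2]
  have hb2 : (0:ℝ) ≤ ∫ θ in (π/4)..(π/2), f θ := by
    apply intervalIntegral.integral_nonneg (by linarith)
    intro θ hθ
    have : 0 ≤ Real.cos θ := Real.cos_nonneg_of_mem_Icc ⟨by linarith [hθ.1], hθ.2⟩
    positivity
  -- lower bound on [π/2, π]
  have hb3 : -(π / 2) ≤ ∫ θ in (π/2)..π, f θ := by
    have hc : ∫ θ in (π/2)..π, (-1:ℝ) = -(π / 2) := by
      rw [intervalIntegral.integral_const]
      simp [smul_eq_mul]
      ring
    rw [← hc]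
    apply intervalIntegral.integral_mono_on (by linarith) (intervalIntegrable_const) (hii _ _)
    intro θ hθ
    have hcos : Real.cos θ ≤ 0 := Real.cos_nonpos_of_pi_div_two_le_of_le hθ.1 (by linarith [hθ.2, hpi.le])
    have hexp : Real.exp (u * Real.cos θ) ≤ 1 := Real.exp_le_one_iff.2 (by nlinarith)
    have hcosm1 : -1 ≤ Real.cos θ := Real.neg_one_le_cos θ
    calc (-1:ℝ) ≤ Real.cos θ := hcosm1
      _ = 1 * Real.cos θ := by ring
      _ ≤ Real.exp (u * Real.cos θ) * Real.cos θ := by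
          exact mul_le_mul_of_nonpos_right hexp hcos
  -- combine
  have hA : π * (7 / 40 * Real.exp (7 / 10 * u) - 1 / 2) ≤ ∫ θ in Ioo (0:ℝ) π, f θ := by
    rw [hIoo, hsplit1, hsplit2]
    nlinarith
  have hE : Real.exp 2 ≤ Real.exp (7 / 10 * u) := Real.exp_le_exp.2 (by linarith)
  have hE2 := exp_two_lb
  have hhalf : Real.exp (u / 2) ≤ Real.exp (7 / 10 * u) := Real.exp_le_exp.2 (by linarith)
  have hfin : π * (1 / 12 * Real.exp (u / 2)) ≤ π * (7 / 40 * Real.exp (7 / 10 * u) - 1 / 2) := by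
    apply mul_le_mul_of_nonneg_left _ hpi.le
    nlinarith [Real.exp_pos (u / 2)]
  rw [show (1:ℝ) / π * (∫ θ in Ioo (0:ℝ) π, f θ) = (∫ θ in Ioo (0:ℝ) π, f θ) / π from by ring,
    le_div_iff₀ hpi]
  calc (1 / 12 * Real.exp (u / 2)) * π = π * (1 / 12 * Real.exp (u / 2)) := by ring
    _ ≤ π * (7 / 40 * Real.exp (7 / 10 * u) - 1 / 2) := hfin
    _ ≤ ∫ θ in Ioo (0:ℝ) π, f θ := hA

lemma Dd_lb_all {u : ℝ} (hu : 0 < u) : Real.exp (-(4 * u)) ≤ Dd u := by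
  have hK := K_lb_all hu
  have h1 : Real.exp (-(4 * u)) = Real.exp (-(2 * u)) ^ 2 := by
    rw [← Real.exp_nat_mul]
    congr 1
    ring
  unfold Dd
  nlinarith [sq_nonneg (π * besselI 1 u), Real.exp_pos (-(2 * u))]

lemma Dd_pos {u : ℝ} (hu : 0 < u) : 0 < Dd u :=
  lt_of_lt_of_le (Real.exp_pos _) (Dd_lb_all hu)

lemma Dd_lb_small {u : ℝ} (h0 : 0 < u) (h1 : u ≤ 1) :
    Real.exp (-(5 / 2)) / (4 * u ^ 2) ≤ Dd u := by
  have hK := K_lb_small h0 h1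
  have h2 : Real.exp (-(5 / 2)) / (4 * u ^ 2) = (Real.exp (-(5 / 4)) / (2 * u)) ^ 2 := by
    rw [div_pow, ← Real.exp_nat_mul]
    norm_num
    ring_nf
  rw [h2]
  unfold Dd
  have hKp : 0 < Real.exp (-(5 / 4)) / (2 * u) := by positivity
  nlinarith [sq_nonneg (π * besselI 1 u)]

lemma Dd_lb_big {u : ℝ} (hu : 3 ≤ u) : Real.exp u / 16 ≤ Dd u := by
  have hI := I_lb hu
  have hpi := Real.pi_gt_three
  have h1 : (1 / 12 * Real.exp (u / 2)) ^ 2 = 1 / 144 * Real.exp u := by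
    rw [mul_pow, ← Real.exp_nat_mul]
    norm_num
    ring_nf
  unfold Dd
  have hI2 : (1 / 12 * Real.exp (u / 2)) ^ 2 ≤ besselI 1 u ^ 2 := by
    apply pow_le_pow_left₀ (by positivity) hI
  have hpi2 : (9:ℝ) ≤ π ^ 2 := by nlinarith
  nlinarith [sq_nonneg (besselK 1 u), Real.exp_pos u, sq_nonneg (besselI 1 u)]

noncomputable def C0 : ℝ := 4 * Real.exp 3 + 3 * Real.exp (27 / 2) + 16

lemma C0_pos : 0 < C0 := by unfold C0; positivity

lemma C0_ge1 : 4 * Real.exp 3 ≤ C0 := by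
  unfold C0
  nlinarith [Real.exp_pos (27 / 2 : ℝ)]

lemma C0_ge2 : 3 * Real.exp (27 / 2) ≤ C0 := by
  unfold C0
  nlinarith [Real.exp_pos (3 : ℝ)]

lemma C0_ge3 : (16:ℝ) ≤ C0 := by
  unfold C0
  nlinarith [Real.exp_pos (3 : ℝ), Real.exp_pos (27 / 2 : ℝ)]

lemma div_Dd_le {u lb B : ℝ} (hu : 0 ≤ u) (hlb : 0 < lb) (hD : lb ≤ Dd u)
    (h : u / lb ≤ B) : u / Dd u ≤ B :=
  le_trans (div_le_div_of_nonneg_left hu hlb hD) h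

lemma phi_bound {u : ℝ} (hu : 0 < u) : u / Dd u ≤ C0 * Real.exp (-(u / 2)) := by
  rcases le_or_gt u 1 with h1 | h1
  · apply div_Dd_le hu.le (by positivity) (Dd_lb_small hu h1)
    have heq : u / (Real.exp (-(5 / 2)) / (4 * u ^ 2)) = 4 * u ^ 3 * Real.exp (5 / 2) := by
      rw [Real.exp_neg]
      field_simp
    rw [heq]
    have h2 : 4 * u ^ 3 * Real.exp (5 / 2) ≤ 4 * Real.exp (5 / 2) := by
      have hu3 : u ^ 3 ≤ 1 := by nlinarith
      nlinarith [Real.exp_pos (5 / 2 : ℝ)]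
    refine h2.trans ?_
    have h3 : Real.exp (5 / 2 : ℝ) = Real.exp 3 * Real.exp (-(1 / 2)) := by
      rw [← Real.exp_add]; norm_num
    have h4 : Real.exp (-(1 / 2) : ℝ) ≤ Real.exp (-(u / 2)) := Real.exp_le_exp.2 (by linarith)
    calc 4 * Real.exp (5 / 2) = 4 * Real.exp 3 * Real.exp (-(1 / 2)) := by rw [h3]; ring
      _ ≤ 4 * Real.exp 3 * Real.exp (-(u / 2)) := by
          apply mul_le_mul_of_nonneg_left h4 (by positivity)
      _ ≤ C0 * Real.exp (-(u / 2)) :=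
          mul_le_mul_of_nonneg_right C0_ge1 (Real.exp_pos _).le
  · rcases le_or_gt u 3 with h3 | h3
    · apply div_Dd_le hu.le (Real.exp_pos _) (Dd_lb_all hu)
      have heq : u / Real.exp (-(4 * u)) = u * Real.exp (4 * u) := by
        rw [Real.exp_neg]
        field_simp
      rw [heq]
      have h2 : u * Real.exp (4 * u) ≤ 3 * Real.exp 12 :=
        mul_le_mul h3 (Real.exp_le_exp.2 (by linarith)) (Real.exp_pos _).le (by norm_num)
      refine h2.trans ?_
      have h4 : Real.exp (12:ℝ) = Real.exp (27 / 2) * Real.exp (-(3 / 2)) := by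
        rw [← Real.exp_add]; norm_num
      have h5 : Real.exp (-(3 / 2) : ℝ) ≤ Real.exp (-(u / 2)) := Real.exp_le_exp.2 (by linarith)
      calc 3 * Real.exp 12 = 3 * Real.exp (27 / 2) * Real.exp (-(3 / 2)) := by rw [h4]; ring
        _ ≤ 3 * Real.exp (27 / 2) * Real.exp (-(u / 2)) := by
            apply mul_le_mul_of_nonneg_left h5 (by positivity)
        _ ≤ C0 * Real.exp (-(u / 2)) :=
            mul_le_mul_of_nonneg_right C0_ge2 (Real.exp_pos _).le
    · apply div_Dd_le hu.le (by positivity) (Dd_lb_big h3.le)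
      have heq : u / (Real.exp u / 16) = 16 * u * Real.exp (-u) := by
        rw [Real.exp_neg]
        field_simp
      rw [heq]
      have hsplit : Real.exp (-u) = Real.exp (-(u / 2)) * Real.exp (-(u / 2)) := by
        rw [← Real.exp_add]; ring_nf
      have hue : u * Real.exp (-(u / 2)) ≤ 1 := by
        have := self_le_exp_half hu.le
        rw [Real.exp_neg, ← div_eq_mul_inv, div_le_one (Real.exp_pos _)]
        exact this
      calc 16 * u * Real.exp (-u)
          = 16 * (u * Real.exp (-(u / 2))) * Real.exp (-(u / 2)) := by rw [hsplit]; ring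
        _ ≤ 16 * 1 * Real.exp (-(u / 2)) := by
            apply mul_le_mul_of_nonneg_right _ (Real.exp_pos _).le
            apply mul_le_mul_of_nonneg_left hue (by norm_num)
        _ ≤ C0 * Real.exp (-(u / 2)) := by
            apply mul_le_mul_of_nonneg_right _ (Real.exp_pos _).le
            simpa using C0_ge3

lemma contK : ContinuousOn (besselK 1) (Ioi 0) := by
  intro u₀ hu₀
  have hu₀' : (0:ℝ) < u₀ := hu₀
  apply ContinuousAt.continuousWithinAt
  unfold besselK
  apply continuousAt_of_dominated (bound := fun t => Real.exp (-(u₀ / 2) * Real.cosh t) * Real.cosh t)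
  · filter_upwards with u
    exact ((Real.continuous_exp.comp (continuous_const.mul Real.continuous_cosh)).mul
      (Real.continuous_cosh.comp (continuous_const.mul continuous_id))).aestronglyMeasurable
  · have hev : ∀ᶠ u in nhds u₀, u ∈ Ioi (u₀ / 2) :=
      (isOpen_Ioi.eventually_mem (show u₀ ∈ Ioi (u₀ / 2) from half_lt_self hu₀'))
    filter_upwards [hev] with u hu
    filter_upwards with t
    have hu2 : u₀ / 2 ≤ u := le_of_lt hu
    rw [one_mul, Real.norm_of_nonneg (by positivity)]
    apply mul_le_mul_of_nonneg_right _ (Real.cosh_pos t).le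
    apply Real.exp_le_exp.2
    nlinarith [Real.cosh_pos t]
  · exact kint (by positivity)
  · filter_upwards with t
    exact ((Real.continuous_exp.comp ((continuous_neg.mul continuous_const))).mul
      continuous_const).continuousAt

lemma contI : Continuous (besselI 1) := by
  have heq : besselI 1 = fun u => (1 / π) * ∫ θ in Ioo (0:ℝ) π, Real.exp (u * Real.cos θ) * Real.cos θ :=
    funext I_eq
  rw [heq]
  apply continuous_const.mul
  rw [continuous_iff_continuousAt]
  intro u₀
  apply continuousAt_of_dominated (bound := fun _ => Real.exp (|u₀| + 1))
  · filter_upwards with u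
    exact ((Real.continuous_exp.comp (continuous_const.mul Real.continuous_cos)).mul
      Real.continuous_cos).aestronglyMeasurable
  · have hev : ∀ᶠ u in nhds u₀, u ∈ Ioo (u₀ - 1) (u₀ + 1) :=
      isOpen_Ioo.eventually_mem (by constructor <;> linarith)
    filter_upwards [hev] with u hu
    filter_upwards with θ
    have habs : |u| ≤ |u₀| + 1 := by
      rw [abs_le]
      rcases abs_le.1 (le_refl |u₀|) with ⟨h1, h2⟩
      constructor <;> [linarith [hu.1]; linarith [hu.2]]
    have hcos : |Real.cos θ| ≤ 1 := Real.abs_cos_le_one θ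
    rw [Real.norm_eq_abs, abs_mul, Real.abs_exp]
    have h1 : u * Real.cos θ ≤ |u₀| + 1 := by
      calc u * Real.cos θ ≤ |u * Real.cos θ| := le_abs_self _
        _ = |u| * |Real.cos θ| := abs_mul u _
        _ ≤ (|u₀| + 1) * 1 := by
            apply mul_le_mul habs hcos (abs_nonneg _) (by positivity)
        _ = |u₀| + 1 := by ring
    calc Real.exp (u * Real.cos θ) * |Real.cos θ| ≤ Real.exp (u * Real.cos θ) * 1 :=
          mul_le_mul_of_nonneg_left hcos (Real.exp_pos _).le
      _ = Real.exp (u * Real.cos θ) := by ring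
      _ ≤ Real.exp (|u₀| + 1) := Real.exp_le_exp.2 h1
  · exact integrableOn_const (by rw [Real.volume_Ioo]; exact ENNReal.ofReal_ne_top)
  · filter_upwards with θ
    exact ((Real.continuous_exp.comp (continuous_mul_right _ |>.comp continuous_id)).mul
      continuous_const).continuousAt

lemma contD : ContinuousOn Dd (Ioi 0) := by
  unfold Dd
  exact (contK.pow 2).add (continuousOn_const.mul ((contI.continuousOn).pow 2))

lemma g_cont (v : ℝ) :
    ContinuousOn (fun u => u * Real.exp (-(v * u)) / Dd u) (Ioi 0) := by
  apply ContinuousOn.div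
  · exact (continuous_id.mul (Real.continuous_exp.comp
      ((continuous_const.mul continuous_id).neg))).continuousOn
  · exact contD
  · intro u hu
    exact (Dd_pos hu).ne'

lemma g_meas (v : ℝ) :
    AEStronglyMeasurable (fun u => u * Real.exp (-(v * u)) / Dd u)
      (volume.restrict (Ioi 0)) :=
  (g_cont v).aestronglyMeasurable measurableSet_Ioi

lemma g_nonneg (v : ℝ) {u : ℝ} (hu : 0 ≤ u) : 0 ≤ u * Real.exp (-(v * u)) / Dd u :=
  div_nonneg (mul_nonneg hu (Real.exp_pos _).le) (Dd_nonneg u)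

lemma g_le {v u : ℝ} (hv : 0 ≤ v) (hu : 0 < u) :
    u * Real.exp (-(v * u)) / Dd u ≤ C0 * Real.exp (-(u / 2)) := by
  have h1 : u * Real.exp (-(v * u)) ≤ u := by
    apply mul_le_of_le_one_right hu.le
    exact Real.exp_le_one_iff.2 (by nlinarith)
  calc u * Real.exp (-(v * u)) / Dd u ≤ u / Dd u := by
        exact (div_le_div_iff_of_pos_right (Dd_pos hu)).2 h1
    _ ≤ C0 * Real.exp (-(u / 2)) := phi_bound hu

lemma bint : IntegrableOn (fun u => C0 * Real.exp (-(u / 2))) (Ioi 0) := by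
  have h := (exp_neg_integrableOn_Ioi 0 (show (0:ℝ) < 1/2 by norm_num)).const_mul C0
  have heq : (fun x : ℝ => C0 * Real.exp (-(1/2) * x)) = fun u => C0 * Real.exp (-(u / 2)) := by
    funext u
    rw [show -(1/2 : ℝ) * u = -(u / 2) by ring]
  rw [← heq]
  exact h

lemma Fint {v : ℝ} (hv : 0 ≤ v) :
    IntegrableOn (fun u => u * Real.exp (-(v * u)) / Dd u) (Ioi 0) := by
  apply Integrable.mono' bint (g_meas v)
  filter_upwards [ae_restrict_mem measurableSet_Ioi] with u hu
  rw [Real.norm_of_nonneg (g_nonneg v (le_of_lt hu))]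
  exact g_le hv hu

lemma F_le {v : ℝ} (hv : 0 ≤ v) :
    (∫ u in Ioi (0:ℝ), u * Real.exp (-(v * u)) / Dd u)
      ≤ ∫ u in Ioi (0:ℝ), C0 * Real.exp (-(u / 2)) := by
  apply setIntegral_mono_on (Fint hv) bint measurableSet_Ioi
  intro u hu
  exact g_le hv hu

lemma contF : ContinuousOn (fun v => ∫ u in Ioi (0:ℝ), u * Real.exp (-(v * u)) / Dd u)
    (Ici 0) := by
  apply continuousOn_of_dominated (bound := fun u => C0 * Real.exp (-(u / 2)))
  · intro v _
    exact g_meas v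
  · intro v hv
    filter_upwards [ae_restrict_mem measurableSet_Ioi] with u hu
    rw [Real.norm_of_nonneg (g_nonneg v (le_of_lt hu))]
    exact g_le hv hu
  · exact bint
  · filter_upwards with u
    apply Continuous.continuousOn
    exact (continuous_const.mul (Real.continuous_exp.comp
      ((continuous_id.mul continuous_const).neg))).div_const _

lemma cube_le {x : ℝ} (hx : 0 ≤ x) : x ^ 3 ≤ 216 * Real.exp (x / 2) := by
  have h := self_le_exp_half (show (0:ℝ) ≤ x / 6 by positivity)
  have h2 : (x / 6) ^ 3 ≤ Real.exp (x / 6 / 2) ^ 3 := pow_le_pow_left₀ (by positivity) h 3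
  have h3 : Real.exp (x / 6 / 2) ^ 3 = Real.exp (x / 4) := by
    rw [← Real.exp_nat_mul]
    congr 1
    ring
  have h4 : Real.exp (x / 4) ≤ Real.exp (x / 2) := Real.exp_le_exp.2 (by linarith)
  nlinarith

lemma small_u_bound {v u : ℝ} (hv : 1 ≤ v) (h0 : 0 < u) (h1 : u ≤ 1) :
    u * Real.exp (-(v * u)) / Dd u
      ≤ 864 * Real.exp (5 / 2) / v ^ 3 * Real.exp (-(v / 2) * u) := by
  have hv0 : (0:ℝ) < v := by linarith
  have hlb := Dd_lb_small h0 h1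
  have step1 : u * Real.exp (-(v * u)) / Dd u
      ≤ u * Real.exp (-(v * u)) / (Real.exp (-(5 / 2)) / (4 * u ^ 2)) :=
    div_le_div_of_nonneg_left (by positivity) (by positivity) hlb
  have step2 : u * Real.exp (-(v * u)) / (Real.exp (-(5 / 2)) / (4 * u ^ 2))
      = 4 * Real.exp (5 / 2) * (u ^ 3 * Real.exp (-(v * u))) := by
    rw [Real.exp_neg (x := 5 / 2)]
    field_simp
  have hcube : (v * u) ^ 3 ≤ 216 * Real.exp (v * u / 2) := cube_le (by positivity)
  have step3 : u ^ 3 * Real.exp (-(v * u)) ≤ 216 / v ^ 3 * Real.exp (-(v / 2) * u) := by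
    have hsplit : Real.exp (-(v * u)) = Real.exp (-(v * u / 2)) * Real.exp (-(v / 2) * u) := by
      rw [← Real.exp_add]
      congr 1
      ring
    rw [hsplit, ← mul_assoc]
    apply mul_le_mul_of_nonneg_right _ (Real.exp_pos _).le
    -- u^3 * exp(-(vu/2)) ≤ 216 / v^3
    rw [Real.exp_neg, ← div_eq_mul_inv, div_le_div_iff₀ (Real.exp_pos _) (by positivity)]
    calc u ^ 3 * v ^ 3 = (v * u) ^ 3 := by ring
      _ ≤ 216 * Real.exp (v * u / 2) := hcube
  calc u * Real.exp (-(v * u)) / Dd u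
      ≤ 4 * Real.exp (5 / 2) * (u ^ 3 * Real.exp (-(v * u))) := by rw [← step2]; exact step1
    _ ≤ 4 * Real.exp (5 / 2) * (216 / v ^ 3 * Real.exp (-(v / 2) * u)) := by
        apply mul_le_mul_of_nonneg_left step3 (by positivity)
    _ = 864 * Real.exp (5 / 2) / v ^ 3 * Real.exp (-(v / 2) * u) := by ring

lemma exp_int_Ioc {v : ℝ} (hv : 1 ≤ v) :
    ∫ u in Ioc (0:ℝ) 1, Real.exp (-(v / 2) * u) ≤ 2 / v := by
  have hv0 : (0:ℝ) < v := by linarith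
  have hder : ∀ x ∈ uIcc (0:ℝ) 1,
      HasDerivAt (fun y => -(2 / v) * Real.exp (-(v / 2) * y)) (Real.exp (-(v / 2) * x)) x := by
    intro x _
    have h := (((hasDerivAt_id x).const_mul (-(v / 2))).exp).const_mul (-(2 / v))
    refine h.congr_deriv ?_
    simp only [id_eq, mul_one]
    have hvk : (2 / v) * (v / 2) = 1 := by field_simp
    linear_combination (Real.exp (-(v / 2) * x)) * hvk
  have hci : IntervalIntegrable (fun x => Real.exp (-(v / 2) * x)) volume 0 1 :=
    (Real.continuous_exp.comp (continuous_const.mul continuous_id)).intervalIntegrable 0 1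
  have heval := intervalIntegral.integral_eq_sub_of_hasDerivAt hder hci
  rw [← intervalIntegral.integral_of_le zero_le_one, heval]
  have h1 : (0:ℝ) < Real.exp (-(v / 2) * 1) := Real.exp_pos _
  have h2 : -(2 / v) * Real.exp (-(v / 2) * 1) - -(2 / v) * Real.exp (-(v / 2) * 0)
      = 2 / v * (1 - Real.exp (-(v / 2) * 1)) := by
    rw [mul_zero, Real.exp_zero]
    ring
  rw [h2]
  have h3 : (0:ℝ) < 2 / v := by positivity
  nlinarith [mul_pos h3 h1]

lemma Fdecay {v : ℝ} (hv : 1 ≤ v) :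
    (∫ u in Ioi (0:ℝ), u * Real.exp (-(v * u)) / Dd u)
      ≤ 1728 * Real.exp (5 / 2) / v ^ 4 + C0 * Real.exp (-(v / 2)) := by
  have hv0 : (0:ℝ) ≤ v := by linarith
  have hvp : (0:ℝ) < v := by linarith
  have hint := Fint hv0
  have hsub1 : Ioc (0:ℝ) 1 ⊆ Ioi 0 := Ioc_subset_Ioi_self
  have hsub2 : Ioi (1:ℝ) ⊆ Ioi 0 := Ioi_subset_Ioi zero_le_one
  have hsplit : (∫ u in Ioi (0:ℝ), u * Real.exp (-(v * u)) / Dd u)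
      = (∫ u in Ioc (0:ℝ) 1, u * Real.exp (-(v * u)) / Dd u)
        + ∫ u in Ioi (1:ℝ), u * Real.exp (-(v * u)) / Dd u := by
    rw [← setIntegral_union (Ioc_disjoint_Ioi le_rfl) measurableSet_Ioi
      (hint.mono_set hsub1) (hint.mono_set hsub2), Ioc_union_Ioi_eq_Ioi zero_le_one]
  rw [hsplit]
  have hp1 : (∫ u in Ioc (0:ℝ) 1, u * Real.exp (-(v * u)) / Dd u)
      ≤ 1728 * Real.exp (5 / 2) / v ^ 4 := by
    have hb0 : IntegrableOn (fun u => 864 * Real.exp (5 / 2) / v ^ 3 * Real.exp (-(v / 2) * u))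
        (Ioi (0:ℝ)) :=
      (exp_neg_integrableOn_Ioi 0 (by positivity : (0:ℝ) < v / 2)).const_mul _
    have hb : IntegrableOn (fun u => 864 * Real.exp (5 / 2) / v ^ 3 * Real.exp (-(v / 2) * u))
        (Ioc (0:ℝ) 1) := hb0.mono_set hsub1
    have h1 : (∫ u in Ioc (0:ℝ) 1, u * Real.exp (-(v * u)) / Dd u)
        ≤ ∫ u in Ioc (0:ℝ) 1, 864 * Real.exp (5 / 2) / v ^ 3 * Real.exp (-(v / 2) * u) := by
      apply setIntegral_mono_on (hint.mono_set hsub1) hb measurableSet_Ioc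
      intro u hu
      exact small_u_bound hv hu.1 hu.2
    refine h1.trans ?_
    rw [MeasureTheory.integral_const_mul]
    have h2 := exp_int_Ioc hv
    calc 864 * Real.exp (5 / 2) / v ^ 3 * ∫ u in Ioc (0:ℝ) 1, Real.exp (-(v / 2) * u)
        ≤ 864 * Real.exp (5 / 2) / v ^ 3 * (2 / v) := by
          apply mul_le_mul_of_nonneg_left h2 (by positivity)
      _ = 1728 * Real.exp (5 / 2) / v ^ 4 := by
          field_simp
          ring
  have hp2 : (∫ u in Ioi (1:ℝ), u * Real.exp (-(v * u)) / Dd u)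
      ≤ C0 * Real.exp (-(v / 2)) := by
    have hbe : IntegrableOn (fun u : ℝ => Real.exp (-u)) (Ioi 1) := by
      simpa using exp_neg_integrableOn_Ioi 1 one_pos
    have hb : IntegrableOn (fun u : ℝ => C0 * Real.exp (-(v / 2)) * Real.exp (-u)) (Ioi 1) :=
      Integrable.const_mul hbe _
    have h1 : (∫ u in Ioi (1:ℝ), u * Real.exp (-(v * u)) / Dd u)
        ≤ ∫ u in Ioi (1:ℝ), C0 * Real.exp (-(v / 2)) * Real.exp (-u) := by
      apply setIntegral_mono_on (hint.mono_set hsub2) hb measurableSet_Ioi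
      intro u hu
      have hu1 : (1:ℝ) < u := hu
      have hu0 : (0:ℝ) < u := by linarith
      have hphi := phi_bound hu0
      have hstep : u * Real.exp (-(v * u)) / Dd u = u / Dd u * Real.exp (-(v * u)) := by
        ring
      rw [hstep]
      have h2 : u / Dd u * Real.exp (-(v * u))
          ≤ C0 * Real.exp (-(u / 2)) * Real.exp (-(v * u)) :=
        mul_le_mul_of_nonneg_right hphi (Real.exp_pos _).le
      refine h2.trans ?_
      have h3 : Real.exp (-(v * u)) ≤ Real.exp (-(v / 2) + -(u / 2)) :=
        Real.exp_le_exp.2 (by nlinarith)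
      have hkey : Real.exp (-(u / 2)) * Real.exp (-(v / 2) + -(u / 2))
          = Real.exp (-(v / 2)) * Real.exp (-u) := by
        rw [← Real.exp_add, ← Real.exp_add]
        congr 1
        ring
      calc C0 * Real.exp (-(u / 2)) * Real.exp (-(v * u))
          ≤ C0 * Real.exp (-(u / 2)) * Real.exp (-(v / 2) + -(u / 2)) := by
            apply mul_le_mul_of_nonneg_left h3
              (mul_nonneg C0_pos.le (Real.exp_pos _).le)
        _ = C0 * Real.exp (-(v / 2)) * Real.exp (-u) := by
            rw [mul_assoc, hkey, mul_assoc]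
    refine h1.trans ?_
    rw [MeasureTheory.integral_const_mul, integral_exp_neg_Ioi]
    have h5 : Real.exp (-1 : ℝ) ≤ 1 := Real.exp_le_one_iff.2 (by norm_num)
    have h6 := mul_le_mul_of_nonneg_left h5
      (mul_nonneg C0_pos.le (Real.exp_pos (-(v / 2))).le)
    calc C0 * Real.exp (-(v / 2)) * Real.exp (-1)
        ≤ C0 * Real.exp (-(v / 2)) * 1 := h6
      _ = C0 * Real.exp (-(v / 2)) := by ring
  linarith

lemma sq_exp_decay {v : ℝ} (hv : 0 ≤ v) :
    v ^ 2 * Real.exp (-(v / 2)) ≤ 16 * Real.exp (-(v / 4)) := by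
  have h := self_le_exp_half (show (0:ℝ) ≤ v / 4 by positivity)
  have h2 : Real.exp (v / 4 / 2) ^ 2 = Real.exp (v / 4) := by
    rw [← Real.exp_nat_mul]; congr 1; ring
  have h3 : v ^ 2 ≤ 16 * Real.exp (v / 4) := by nlinarith [Real.exp_pos (v / 4 / 2)]
  have h4 : Real.exp (v / 4) * Real.exp (-(v / 2)) = Real.exp (-(v / 4)) := by
    rw [← Real.exp_add]; congr 1; ring
  calc v ^ 2 * Real.exp (-(v / 2)) ≤ 16 * Real.exp (v / 4) * Real.exp (-(v / 2)) := by
        apply mul_le_mul_of_nonneg_right h3 (Real.exp_pos _).le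
    _ = 16 * Real.exp (-(v / 4)) := by rw [mul_assoc, h4]

lemma int_inv_sq : IntegrableOn (fun v : ℝ => (v ^ 2)⁻¹) (Ioi 1) := by
  have h := integrableOn_Ioi_rpow_of_lt (show (-2:ℝ) < -1 by norm_num) one_pos
  apply h.congr_fun _ measurableSet_Ioi
  intro v hv
  have hv0 : (0:ℝ) < v := lt_trans one_pos hv
  show v ^ (-(2:ℝ)) = (v ^ 2)⁻¹
  rw [Real.rpow_neg hv0.le, show ((2:ℝ)) = ((2:ℕ):ℝ) by norm_num, Real.rpow_natCast]

lemma int_exp_quarter : IntegrableOn (fun v : ℝ => Real.exp (-(v / 4))) (Ioi 1) := by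
  have h := exp_neg_integrableOn_Ioi 1 (show (0:ℝ) < 1/4 by norm_num)
  have heq : (fun x : ℝ => Real.exp (-(1/4) * x)) = fun v => Real.exp (-(v / 4)) := by
    funext v
    rw [show -(1/4 : ℝ) * v = -(v / 4) by ring]
  rw [← heq]
  exact h

end Aux16

open Aux16

lemma w3_eq (a v : ℝ) :
    w3 a v = a ^ (-2 : ℤ) * ∫ u in Ioi (0:ℝ), u * Real.exp (-(v * u)) / Dd u := rfl

/-- For `n = 3` and `a > 0`, the function `w` is well defined (the integral converges
for every `v ≥ 0`), nonnegative, continuous and bounded on `[0,∞)`, and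
`∫₀^∞ v^k w(v) dv < ∞` for `k = 0, 1, 2`. -/
theorem stmt_16 (a : ℝ) (ha : 0 < a) :
    (∀ v : ℝ, 0 ≤ v →
        IntegrableOn
          (fun u : ℝ => u * Real.exp (-(v * u)) / (besselK 1 u ^ 2 + π ^ 2 * besselI 1 u ^ 2))
          (Ioi 0)) ∧
    (∀ v : ℝ, 0 ≤ v → 0 ≤ w3 a v) ∧
    ContinuousOn (w3 a) (Ici 0) ∧
    (∃ M : ℝ, ∀ v ∈ Ici (0:ℝ), w3 a v ≤ M) ∧
    (∀ k : ℕ, k ≤ 2 → IntegrableOn (fun v : ℝ => v ^ k * w3 a v) (Ioi 0)) := by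
  have hP : (0:ℝ) ≤ a ^ (-2 : ℤ) := zpow_nonneg ha.le _
  have hnonneg : ∀ v : ℝ, 0 ≤ v → 0 ≤ w3 a v := by
    intro v hv
    rw [w3_eq]
    apply mul_nonneg hP
    apply setIntegral_nonneg measurableSet_Ioi
    intro u hu
    exact g_nonneg v (le_of_lt hu)
  have hcont : ContinuousOn (w3 a) (Ici 0) := by
    have h := continuousOn_const (c := a ^ (-2 : ℤ)) (s := Ici (0:ℝ)) |>.mul contF
    exact h
  refine ⟨fun v hv => Fint hv, hnonneg, hcont, ?_, ?_⟩
  · refine ⟨a ^ (-2 : ℤ) * ∫ u in Ioi (0:ℝ), C0 * Real.exp (-(u / 2)), ?_⟩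
    intro v hv
    rw [w3_eq]
    exact mul_le_mul_of_nonneg_left (F_le hv) hP
  · intro k hk
    have hpart1 : IntegrableOn (fun v : ℝ => v ^ k * w3 a v) (Ioc 0 1) := by
      have h1 : ContinuousOn (fun v : ℝ => v ^ k * w3 a v) (Icc (0:ℝ) 1) :=
        ((continuous_pow k).continuousOn).mul (hcont.mono Icc_subset_Ici_self)
      exact (h1.integrableOn_compact isCompact_Icc).mono_set Ioc_subset_Icc_self
    have hpart2 : IntegrableOn (fun v : ℝ => v ^ k * w3 a v) (Ioi 1) := by
      set A1 : ℝ := a ^ (-2 : ℤ) * (1728 * Real.exp (5 / 2)) with hA1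
      set A2 : ℝ := a ^ (-2 : ℤ) * (16 * C0) with hA2
      have hbint : IntegrableOn (fun v : ℝ => A1 * (v ^ 2)⁻¹ + A2 * Real.exp (-(v / 4)))
          (Ioi 1) := (int_inv_sq.const_mul A1).add (int_exp_quarter.const_mul A2)
      apply Integrable.mono' hbint
      · apply ContinuousOn.aestronglyMeasurable _ measurableSet_Ioi
        apply ((continuous_pow k).continuousOn).mul
        apply hcont.mono
        intro x hx
        exact le_of_lt (lt_trans one_pos (show (1:ℝ) < x from hx))
      · filter_upwards [ae_restrict_mem measurableSet_Ioi] with v hv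
        have hv1 : (1:ℝ) < v := hv
        have hv0 : (0:ℝ) ≤ v := by linarith
        have hw0 : 0 ≤ w3 a v := hnonneg v hv0
        rw [Real.norm_of_nonneg (mul_nonneg (pow_nonneg hv0 k) hw0)]
        have hvk : v ^ k ≤ v ^ 2 := pow_le_pow_right₀ hv1.le hk
        have hF := Fdecay hv1.le
        have hw : w3 a v ≤ a ^ (-2 : ℤ) *
            (1728 * Real.exp (5 / 2) / v ^ 4 + C0 * Real.exp (-(v / 2))) := by
          rw [w3_eq]
          exact mul_le_mul_of_nonneg_left hF hP
        have step1 : v ^ k * w3 a v ≤ v ^ 2 * (a ^ (-2 : ℤ) *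
            (1728 * Real.exp (5 / 2) / v ^ 4 + C0 * Real.exp (-(v / 2)))) := by
          apply mul_le_mul hvk hw hw0 (by positivity)
        refine step1.trans ?_
        have hvne : v ≠ 0 := by linarith
        have hvv : v ^ 2 / v ^ 4 = (v ^ 2)⁻¹ := by
          field_simp
        have hexp : v ^ 2 * Real.exp (-(v / 2)) ≤ 16 * Real.exp (-(v / 4)) :=
          sq_exp_decay hv0
        have hexpand : v ^ 2 * (a ^ (-2 : ℤ) *
            (1728 * Real.exp (5 / 2) / v ^ 4 + C0 * Real.exp (-(v / 2))))
            = A1 * (v ^ 2 / v ^ 4)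
              + (a ^ (-2 : ℤ) * C0) * (v ^ 2 * Real.exp (-(v / 2))) := by
          rw [hA1]
          ring
        rw [hexpand, hvv]
        have h2 : (a ^ (-2 : ℤ) * C0) * (v ^ 2 * Real.exp (-(v / 2)))
            ≤ A2 * Real.exp (-(v / 4)) := by
          rw [hA2]
          calc (a ^ (-2 : ℤ) * C0) * (v ^ 2 * Real.exp (-(v / 2)))
              ≤ (a ^ (-2 : ℤ) * C0) * (16 * Real.exp (-(v / 4))) := by
                apply mul_le_mul_of_nonneg_left hexp (mul_nonneg hP C0_pos.le)
            _ = a ^ (-2 : ℤ) * (16 * C0) * Real.exp (-(v / 4)) := by ring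
        linarith
    have := hpart1.union hpart2
    rwa [Ioc_union_Ioi_eq_Ioi zero_le_one] at this
end
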